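/- arXiv:math/0210379 — 13 statements merged into one kernel-verified Lean document; each statement's English description precedes it below -/
import Mathlib

section
/- Let X be a topological space and {f_s : X → [0,∞)}_{s∈S} a family of continuous functions such that f(x) := sup over finite T ⊆ S of ∑_{s∈T} f_s(x) is finite for each x. Then f is continuous if and only if for every x ∈ X and ε > 0 there exist a neighborhood U of x and a finite subset T of S such that ∑_{s∈S∖T} f_s(y) < ε for all y ∈ U. -/
/-!
With nonnegative terms the finite partial sums increase with the index set, so the condition on
the tails says exactly that the partial sums converge to `F` locally uniformly. A locally uniform
limit of continuous functions is continuous, and conversely Dini's theorem (which needs no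
compactness for local uniformity) turns monotone pointwise convergence to a continuous limit into
locally uniform convergence.
-/

open Filter Topology

lemma HasSum.tsum_subtype_notMem {S G : Type*} [AddCommGroup G] [TopologicalSpace G]
    [IsTopologicalAddGroup G] [T2Space G] {g : S → G} {a : G} (h : HasSum g a) (T : Finset S) :
    ∑' s : {s : S // s ∉ T}, g s = a - ∑ s ∈ T, g s :=
  ((Finset.hasSum_compl_iff T).mpr (by simpa using h)).tsum_eq

lemma monotone_finsetSum_of_nonneg {X S : Type*} {f : S → X → ℝ} (hnn : ∀ s x, 0 ≤ f s x) :
    Monotone fun (T : Finset S) (x : X) => ∑ s ∈ T, f s x :=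
  fun _ _ hTT' x => Finset.sum_le_sum_of_subset_of_nonneg hTT' fun s _ _ => hnn s x

section NonnegFamily

variable {X S : Type*} [TopologicalSpace X] {f : S → X → ℝ} {F : X → ℝ}

lemma hasSumLocallyUniformly_iff_tsum_compl_lt (hnn : ∀ s x, 0 ≤ f s x)
    (hsum : ∀ x, HasSum (fun s => f s x) (F x)) :
    HasSumLocallyUniformly f F ↔
      ∀ x : X, ∀ ε : ℝ, 0 < ε → ∃ U ∈ 𝓝 x, ∃ T : Finset S,
        ∀ y ∈ U, (∑' s : {s : S // s ∉ T}, f s.1 y) < ε := by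
  have dist_eq (T : Finset S) (y : X) : dist (F y) (∑ s ∈ T, f s y) = F y - ∑ s ∈ T, f s y :=
    abs_of_nonneg <| sub_nonneg.mpr <| sum_le_hasSum T (fun s _ => hnn s y) (hsum y)
  simp_rw [hasSumLocallyUniformly_iff_tendstoLocallyUniformly, Metric.tendstoLocallyUniformly_iff,
    dist_eq, fun T y => (hsum y).tsum_subtype_notMem T]
  constructor
  · intro h x ε hε
    obtain ⟨U, hU, hev⟩ := h ε hε x
    exact ⟨U, hU, hev.exists⟩
  · intro h ε hε x
    obtain ⟨U, hU, T, hT⟩ := h x ε hε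
    refine ⟨U, hU, ?_⟩
    filter_upwards [eventually_ge_atTop T] with T' hTT' y hy
    have := monotone_finsetSum_of_nonneg hnn hTT' y
    linarith [hT y hy]

lemma continuous_iff_hasSumLocallyUniformly (hcont : ∀ s, Continuous (f s))
    (hnn : ∀ s x, 0 ≤ f s x) (hsum : ∀ x, HasSum (fun s => f s x) (F x)) :
    Continuous F ↔ HasSumLocallyUniformly f F := by
  have partial_cont (T : Finset S) : Continuous fun x => ∑ s ∈ T, f s x :=
    continuous_finsetSum T fun s _ => hcont s
  refine ⟨fun hF => ?_, fun h => ?_⟩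
  · exact (monotone_finsetSum_of_nonneg hnn).tendstoLocallyUniformly_of_forall_tendsto
      partial_cont hF hsum
  · exact h.continuous (Frequently.of_forall partial_cont)

end NonnegFamily

theorem stmt_0 {X : Type*} [TopologicalSpace X] {S : Type*}
    (f : S → X → ℝ) (hcont : ∀ s, Continuous (f s)) (hnn : ∀ s x, 0 ≤ f s x)
    (F : X → ℝ) (hsum : ∀ x, HasSum (fun s => f s x) (F x)) :
    Continuous F ↔
      ∀ x : X, ∀ ε : ℝ, 0 < ε → ∃ U ∈ nhds x, ∃ T : Finset S,
        ∀ y ∈ U, (∑' s : {s : S // s ∉ T}, f s.1 y) < ε :=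
  (continuous_iff_hasSumLocallyUniformly hcont hnn hsum).trans
    (hasSumLocallyUniformly_iff_tsum_compl_lt hnn hsum)
end

section
/- If {f_s : X → [0,∞)}_{s∈S} is an equicontinuous family of continuous functions whose pointwise sum f = ∑_{s∈S} f_s is finite-valued, then {f_s}_{s∈S} is strongly equicontinuous: for each ε > 0 and x ∈ X there is a neighborhood U of x and a finite T ⊆ S with f_s(y) < ε for all y ∈ U and s ∈ S∖T. -/
open Filter Topology

lemma Summable.exists_finset_forall_notMem_lt {S : Type*} {g : S → ℝ} (hg : Summable g)
    {ε : ℝ} (hε : 0 < ε) : ∃ T : Finset S, ∀ s ∉ T, g s < ε := by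
  have hsmall : ∀ᶠ s in cofinite, g s < ε :=
    hg.tendsto_cofinite_zero.eventually (eventually_lt_nhds hε)
  obtain ⟨F, hF, hFc⟩ := hasBasis_cofinite.eventually_iff.mp hsmall
  exact ⟨hF.toFinset, fun s hs => hFc (by simpa using hs)⟩

theorem stmt_3_general {X : Type*} [TopologicalSpace X] {S : Type*}
    (f : S → X → ℝ)
    (hequi : ∀ ε : ℝ, 0 < ε → ∀ a : X, ∃ U ∈ nhds a,
        ∀ s, ∀ x ∈ U, ∀ y ∈ U, |f s x - f s y| < ε)
    (hsumm : ∀ x, Summable fun s => f s x) :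
    ∀ ε : ℝ, 0 < ε → ∀ x : X, ∃ U ∈ nhds x, ∃ T : Finset S,
      ∀ y ∈ U, ∀ s ∉ T, f s y < ε := by
  intro ε hε x
  obtain ⟨U, hU, hosc⟩ := hequi (ε / 2) (half_pos hε) x
  obtain ⟨T, hT⟩ := (hsumm x).exists_finset_forall_notMem_lt (half_pos hε)
  refine ⟨U, hU, T, fun y hy s hs => ?_⟩
  have hclose := (abs_lt.mp (hosc s x (mem_of_mem_nhds hU) y hy)).1
  linarith [hT s hs]

theorem stmt_3 {X : Type*} [TopologicalSpace X] {S : Type*}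
    (f : S → X → ℝ) (hcont : ∀ s, Continuous (f s)) (hnn : ∀ s x, 0 ≤ f s x)
    (hequi : ∀ ε : ℝ, 0 < ε → ∀ a : X, ∃ U ∈ nhds a,
        ∀ s, ∀ x ∈ U, ∀ y ∈ U, |f s x - f s y| < ε)
    (hsumm : ∀ x, Summable fun s => f s x) :
    ∀ ε : ℝ, 0 < ε → ∀ x : X, ∃ U ∈ nhds x, ∃ T : Finset S,
      ∀ y ∈ U, ∀ s ∉ T, f s y < ε :=
  stmt_3_general f hequi hsumm
end

section
/- Every equicontinuous partition {f_s}_{s∈S} of a continuous positive finite-valued function f : X → (0,∞) admits a locally finite approximation: there is a partition of unity {g_s}_{s∈S} on X which is locally finite, such that g_s(x) > 0 implies f_s(x) > 0 for every s and x, and the closure of {x : g_s(x) > 0} is contained in {x : f_s(x) > 0} for each s. -/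
/-!
The functions `f s` tend to `0` cofinitely at each point, so `M x = ⨆ s, f s x` is a positive
real number, and equicontinuity makes `M` continuous. Truncating at half the supremum,
`h s = max (f s - M / 2) 0`, keeps at every point a term that is not cut off, and near any `a`
only the finitely many `s` with `f s a ≥ M a / 6` survive, again by equicontinuity. The
normalized family `h s / ∑ s, h s` is then a locally finite partition of unity, and the support
of its `s`-th member lies in the closed set `{M / 2 ≤ f s} ⊆ {0 < f s}`.
-/

open Set Filter Topology Function

section

variable {ι X : Type*} [TopologicalSpace X]

theorem HasSum.exists_pos {f : ι → ℝ} {a : ℝ} (hf : HasSum f a) (ha : 0 < a) :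
    ∃ i, 0 < f i := by
  by_contra! h
  exact ha.not_ge (hasSum_le h hf hasSum_zero)

theorem PartitionOfUnity.hasSum_one {s : Set X} (ρ : PartitionOfUnity ι X s) {x : X}
    (hx : x ∈ s) : HasSum (fun i => ρ i x) 1 := by
  have hfin := ρ.locallyFinite.point_finite x
  simpa only [tsum_eq_finsum hfin, ρ.sum_eq_one hx] using
    (summable_of_hasFiniteSupport (L := SummationFilter.unconditional ι) hfin).hasSum

theorem exists_partitionOfUnity_support_eq {h : ι → X → ℝ} (hc : ∀ i, Continuous (h i))
    (h0 : ∀ i x, 0 ≤ h i x) (hlf : LocallyFinite fun i => support (h i))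
    (hpos : ∀ x, ∃ i, 0 < h i x) :
    ∃ ρ : PartitionOfUnity ι X, ∀ i, support (ρ i) = support (h i) := by
  set H : X → ℝ := fun x => ∑ᶠ i, h i x
  have hHpos : ∀ x, 0 < H x := fun x =>
    let ⟨i, hi⟩ := hpos x
    hi.trans_le (single_le_finsum i (hlf.point_finite x) fun j => h0 j x)
  have hsupp : ∀ i, support (fun x => h i x / H x) = support (h i) := fun i => by
    ext x
    simp [(hHpos x).ne']
  have hsum : ∀ x, ∑ᶠ i, h i x / H x = 1 := fun x => by
    simp_rw [div_eq_mul_inv, ← finsum_mul]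
    exact mul_inv_cancel₀ (hHpos x).ne'
  refine ⟨⟨fun i => ⟨fun x => h i x / H x, (hc i).div (continuous_finsum hc hlf)
      fun x => (hHpos x).ne'⟩, ?_, fun i x => div_nonneg (h0 i x) (hHpos x).le,
      fun x _ => hsum x, fun x => (hsum x).le⟩, hsupp⟩
  simpa only [ContinuousMap.coe_mk, hsupp] using hlf

theorem Equicontinuous.continuous_iSup {f : ι → X → ℝ} (hf : Equicontinuous f)
    (hb : ∀ x, BddAbove (range fun i => f i x)) : Continuous fun x => ⨆ i, f i x := by
  rcases isEmpty_or_nonempty ι with hι | hι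
  · simpa only [Real.iSup_of_isEmpty] using continuous_const
  refine continuous_iff_continuousAt.2 fun a => Metric.tendsto_nhds.2 fun ε hε => ?_
  obtain ⟨U, hU, hUf⟩ := Metric.equicontinuousAt_iff_pair.1 (hf a) (ε / 2) (half_pos hε)
  have hle : ∀ x ∈ U, ∀ y ∈ U, ⨆ i, f i x ≤ (⨆ i, f i y) + ε / 2 := fun x hx y hy =>
    ciSup_le fun i => by
      have := (abs_lt.1 (hUf x hx y hy i)).2
      linarith [le_ciSup (hb y) i]
  filter_upwards [hU] with x hx
  rw [Real.dist_eq, abs_lt]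
  constructor <;> linarith [hle x hx a (mem_of_mem_nhds hU), hle a (mem_of_mem_nhds hU) x hx]

theorem Equicontinuous.locallyFinite_setOf_lt {f : ι → X → ℝ} (hf : Equicontinuous f)
    (hf0 : ∀ x, Tendsto (fun i => f i x) cofinite (𝓝 0)) {m : X → ℝ} (hm : Continuous m)
    (hm0 : ∀ x, 0 < m x) : LocallyFinite fun i => {x | m x < f i x} := by
  intro a
  have hε : 0 < m a / 3 := by linarith [hm0 a]
  have hnear : ∀ᶠ x in 𝓝 a, ∀ i, dist (f i a) (f i x) < m a / 3 :=
    Metric.equicontinuousAt_iff_right.1 (hf a) _ hε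
  have hm_near : ∀ᶠ x in 𝓝 a, 2 * m a / 3 < m x :=
    hm.continuousAt.eventually (lt_mem_nhds (by linarith [hm0 a]))
  have hsmall : {i | ¬ f i a < m a / 3}.Finite :=
    eventually_cofinite.1 ((hf0 a).eventually (gt_mem_nhds hε))
  refine ⟨_, hnear.and hm_near, hsmall.subset ?_⟩
  rintro i ⟨x, hfx, hx, hmx⟩
  have := (abs_lt.1 (hx i)).1
  simp only [mem_ofPred_eq, not_lt] at hfx ⊢
  linarith

theorem Equicontinuous.exists_partitionOfUnity_tsupport_subset {f : ι → X → ℝ}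
    (hf : Equicontinuous f) (hf0 : ∀ x, Tendsto (fun i => f i x) cofinite (𝓝 0))
    (hpos : ∀ x, ∃ i, 0 < f i x) :
    ∃ ρ : PartitionOfUnity ι X, ∀ i, tsupport (ρ i) ⊆ {x | 0 < f i x} := by
  set M : X → ℝ := fun x => ⨆ i, f i x
  have hMc : Continuous M := hf.continuous_iSup fun x => (hf0 x).bddAbove_range_of_cofinite
  have hMpos : ∀ x, 0 < M x := fun x =>
    let ⟨i, hi⟩ := hpos x
    hi.trans_le (le_ciSup (hf0 x).bddAbove_range_of_cofinite i)
  set h : ι → X → ℝ := fun i x => max (f i x - M x / 2) 0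
  have hsupp : ∀ i, support (h i) = {x | M x / 2 < f i x} := fun i => by
    ext x
    simp [h]
  have htop : ∀ x, ∃ i, 0 < h i x := fun x => by
    obtain ⟨i₀, -⟩ := hpos x
    have : Nonempty ι := ⟨i₀⟩
    obtain ⟨i, hi⟩ := exists_lt_of_lt_ciSup (half_lt_self (hMpos x))
    exact ⟨i, lt_max_iff.2 (Or.inl (sub_pos.2 hi))⟩
  obtain ⟨ρ, hρ⟩ := exists_partitionOfUnity_support_eq (h := h)
    (fun i => ((hf.continuous i).sub (hMc.div_const 2)).max continuous_const)
    (fun i x => le_max_right _ _)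
    (by simpa only [hsupp] using
      hf.locallyFinite_setOf_lt hf0 (hMc.div_const 2) fun x => half_pos (hMpos x))
    htop
  refine ⟨ρ, fun i => ?_⟩
  have hclosed : IsClosed {x | M x / 2 ≤ f i x} := isClosed_le (hMc.div_const 2) (hf.continuous i)
  have hlt : support (ρ i) ⊆ {x | M x / 2 < f i x} := by rw [hρ, hsupp]
  calc tsupport (ρ i) ⊆ {x | M x / 2 ≤ f i x} :=
        closure_minimal (hlt.trans (ofPred_subset_ofPred.2 fun _ => le_of_lt)) hclosed
    _ ⊆ {x | 0 < f i x} := fun x hx => (half_pos (hMpos x)).trans_le hx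

end

theorem stmt_5_general {X : Type*} [TopologicalSpace X] {S : Type*}
    (f : S → X → ℝ)
    (F : X → ℝ) (hFpos : ∀ x, 0 < F x)
    (hsum : ∀ x, HasSum (fun s => f s x) (F x))
    (hequi : ∀ ε : ℝ, 0 < ε → ∀ a : X, ∃ U ∈ nhds a,
        ∀ s, ∀ x ∈ U, ∀ y ∈ U, |f s x - f s y| < ε) :
    ∃ g : S → X → ℝ,
      (∀ s, Continuous (g s)) ∧ (∀ s x, 0 ≤ g s x) ∧
      (∀ x, HasSum (fun s => g s x) 1) ∧
      (∀ x : X, ∃ U ∈ nhds x, {s : S | ∃ y ∈ U, g s y ≠ 0}.Finite) ∧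
      (∀ s x, 0 < g s x → 0 < f s x) ∧
      (∀ s, closure {x | 0 < g s x} ⊆ {x | 0 < f s x}) := by
  have hf : Equicontinuous f := fun a => Metric.equicontinuousAt_iff_pair.2 fun ε hε =>
    let ⟨U, hU, hUf⟩ := hequi ε hε a
    ⟨U, hU, fun x hx y hy s => by simpa only [Real.dist_eq] using hUf s x hx y hy⟩
  obtain ⟨ρ, hρ⟩ := hf.exists_partitionOfUnity_tsupport_subset
    (fun x => (hsum x).summable.tendsto_cofinite_zero) fun x => (hsum x).exists_pos (hFpos x)
  have hsupp : ∀ s, {x | 0 < ρ s x} = support (ρ s) := fun s => by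
    ext x
    simp [lt_iff_le_and_ne, ρ.nonneg s x, eq_comm]
  refine ⟨fun s x => ρ s x, fun s => (ρ s).continuous, ρ.nonneg,
    fun x => ρ.hasSum_one (mem_univ x), fun x => ?_, fun s x hx => hρ s (subset_tsupport _ ?_),
    fun s => hsupp s ▸ hρ s⟩
  · obtain ⟨U, hU, hfin⟩ := ρ.locallyFinite x
    exact ⟨U, hU, hfin.subset fun s ⟨y, hy, hne⟩ => ⟨y, hne, hy⟩⟩
  · exact hsupp s ▸ hx

theorem stmt_5 {X : Type*} [TopologicalSpace X] {S : Type*}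
    (f : S → X → ℝ) (hcont : ∀ s, Continuous (f s)) (hnn : ∀ s x, 0 ≤ f s x)
    (F : X → ℝ) (hFc : Continuous F) (hFpos : ∀ x, 0 < F x)
    (hsum : ∀ x, HasSum (fun s => f s x) (F x))
    (hequi : ∀ ε : ℝ, 0 < ε → ∀ a : X, ∃ U ∈ nhds a,
        ∀ s, ∀ x ∈ U, ∀ y ∈ U, |f s x - f s y| < ε) :
    ∃ g : S → X → ℝ,
      (∀ s, Continuous (g s)) ∧ (∀ s x, 0 ≤ g s x) ∧
      (∀ x, HasSum (fun s => g s x) 1) ∧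
      (∀ x : X, ∃ U ∈ nhds x, {s : S | ∃ y ∈ U, g s y ≠ 0}.Finite) ∧
      (∀ s x, 0 < g s x → 0 < f s x) ∧
      (∀ s, closure {x | 0 < g s x} ⊆ {x | 0 < f s x}) :=
  stmt_5_general f F hFpos hsum hequi
end

section
/- Let S be a well-ordered set, 𝒰 = {U_s}_{s∈S} an open cover of a space X, and {f_s : X → [0,1]}_{s∈S} a 𝒰-small equicontinuous partition of a positive-valued function f : X → (0,∞]. Define g_s := max(0, f_s − sup_{t<s} f_t). Then {g_s}_{s∈S} is a 𝒰-small equicontinuous partition of a function g : X → (0,1]; in particular ∑_{s∈S} g_s(x) ≤ 1 and ∑_{s∈S} g_s(x) > 0 for every x ∈ X. -/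
/-!
Write `M_s := sup_{t<s} f_t` (`supBelow f s`), so that `g_s = max 0 (f_s - M_s)` and
`g_s + M_s = max M_s f_s`. The suprema `M_s` move no more than the `f_t` do, which makes `{g_s}`
equicontinuous. Adding the `g_u` over a finite set of indices from the largest one down telescopes
against these identities: the sum over indices below `s` is at most `M_s`, so every partial sum is
at most `1`. If all `g_s` vanished at `x`, well-founded induction would give `M_s(x) = 0` and then
`f_s(x) = 0` for every `s`, contradicting the positivity of `∑ f_s(x)`.
-/

open Set Finset

lemma ciSup_le_ciSup_add {ι : Sort*} [Nonempty ι] {F G : ι → ℝ} (hG : BddAbove (range G))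
    {c : ℝ} (h : ∀ i, F i ≤ G i + c) : ⨆ i, F i ≤ (⨆ i, G i) + c :=
  ciSup_le fun i => (h i).trans (add_le_add_left (le_ciSup hG i) c)

lemma abs_ciSup_sub_ciSup_le {ι : Sort*} {F G : ι → ℝ} (hF : BddAbove (range F))
    (hG : BddAbove (range G)) {c : ℝ} (hc : 0 ≤ c) (h : ∀ i, |F i - G i| ≤ c) :
    |(⨆ i, F i) - ⨆ i, G i| ≤ c := by
  rcases isEmpty_or_nonempty ι with hι | hι
  · simpa [Real.iSup_of_isEmpty] using hc
  · refine abs_sub_le_iff.2 ⟨?_, ?_⟩ <;> rw [sub_le_iff_le_add']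
    · exact ciSup_le_ciSup_add hG fun i => by linarith [abs_le.1 (h i)]
    · exact ciSup_le_ciSup_add hF fun i => by linarith [abs_le.1 (h i)]

section SupBelow

variable {S X : Type*} [LinearOrder S] {f : S → X → ℝ} {s t : S} {x : X}

/-- For a least `s` this is a supremum over an empty type, i.e. `0` (Mathlib's junk value for
`ℝ`), which is also the right value for nonnegative `f`. -/
noncomputable def supBelow (f : S → X → ℝ) (s : S) (x : X) : ℝ :=
  ⨆ t : {t : S // t < s}, f t x

noncomputable def excessOverSupBelow (f : S → X → ℝ) (s : S) (x : X) : ℝ :=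
  max 0 (f s x - supBelow f s x)

lemma bddAbove_range_below (hf1 : ∀ s x, f s x ≤ 1) (s : S) (x : X) :
    BddAbove (range fun t : {t : S // t < s} => f t x) :=
  ⟨1, by rintro _ ⟨t, rfl⟩; exact hf1 t x⟩

lemma supBelow_nonneg (hf0 : ∀ s x, 0 ≤ f s x) (s : S) (x : X) : 0 ≤ supBelow f s x :=
  Real.iSup_nonneg fun t => hf0 t x

lemma supBelow_le_one (hf1 : ∀ s x, f s x ≤ 1) (s : S) (x : X) : supBelow f s x ≤ 1 :=
  Real.iSup_le (fun t => hf1 t x) zero_le_one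

lemma le_supBelow (hf1 : ∀ s x, f s x ≤ 1) (hts : t < s) : f t x ≤ supBelow f s x :=
  le_ciSup (bddAbove_range_below hf1 s x) ⟨t, hts⟩

lemma supBelow_mono (hf0 : ∀ s x, 0 ≤ f s x) (hf1 : ∀ s x, f s x ≤ 1) (hts : t < s) :
    supBelow f t x ≤ supBelow f s x :=
  Real.iSup_le (fun u => le_supBelow hf1 (u.2.trans hts)) (supBelow_nonneg hf0 s x)

lemma excessOverSupBelow_nonneg (s : S) (x : X) : 0 ≤ excessOverSupBelow f s x :=
  le_max_left _ _

lemma excessOverSupBelow_add_supBelow (s : S) (x : X) :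
    excessOverSupBelow f s x + supBelow f s x = max (supBelow f s x) (f s x) := by
  rw [excessOverSupBelow, ← max_add_add_right, zero_add, sub_add_cancel]

lemma excessOverSupBelow_eq_zero (hf0 : ∀ s x, 0 ≤ f s x) (hfsx : f s x = 0) :
    excessOverSupBelow f s x = 0 := by
  rw [excessOverSupBelow, hfsx, zero_sub, max_eq_left (neg_nonpos.2 (supBelow_nonneg hf0 s x))]

lemma sum_excessOverSupBelow_le_supBelow (hf0 : ∀ s x, 0 ≤ f s x) (hf1 : ∀ s x, f s x ≤ 1)
    {F : Finset S} (hF : ∀ u ∈ F, u < s) (x : X) :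
    ∑ u ∈ F, excessOverSupBelow f u x ≤ supBelow f s x := by
  classical
  induction F using Finset.induction_on_max generalizing s with
  | empty => simpa using supBelow_nonneg hf0 s x
  | insert a F haF ih =>
    have has : a < s := hF a (mem_insert_self a F)
    calc ∑ u ∈ insert a F, excessOverSupBelow f u x
        = excessOverSupBelow f a x + ∑ u ∈ F, excessOverSupBelow f u x :=
          sum_insert fun ha => (haF a ha).false
      _ ≤ excessOverSupBelow f a x + supBelow f a x := by gcongr; exact ih haF
      _ = max (supBelow f a x) (f a x) := excessOverSupBelow_add_supBelow a x
      _ ≤ supBelow f s x := max_le (supBelow_mono hf0 hf1 has) (le_supBelow hf1 has)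

lemma sum_excessOverSupBelow_le_one (hf0 : ∀ s x, 0 ≤ f s x) (hf1 : ∀ s x, f s x ≤ 1)
    (F : Finset S) (x : X) : ∑ u ∈ F, excessOverSupBelow f u x ≤ 1 := by
  classical
  induction F using Finset.induction_on_max with
  | empty => simp
  | insert a F haF _ =>
    calc ∑ u ∈ insert a F, excessOverSupBelow f u x
        = excessOverSupBelow f a x + ∑ u ∈ F, excessOverSupBelow f u x :=
          sum_insert fun ha => (haF a ha).false
      _ ≤ excessOverSupBelow f a x + supBelow f a x := by
          gcongr; exact sum_excessOverSupBelow_le_supBelow hf0 hf1 haF x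
      _ = max (supBelow f a x) (f a x) := excessOverSupBelow_add_supBelow a x
      _ ≤ 1 := max_le (supBelow_le_one hf1 a x) (hf1 a x)

lemma exists_excessOverSupBelow_pos [WellFoundedLT S] (hpos : ∃ s, 0 < f s x) :
    ∃ s, 0 < excessOverSupBelow f s x := by
  by_contra! hzero
  suffices ∀ s, f s x ≤ 0 from hpos.elim fun s hs => (this s).not_gt hs
  intro s
  induction s using WellFoundedLT.induction with
  | _ s ih =>
    have hM : supBelow f s x ≤ 0 := Real.iSup_le (fun t => ih t t.2) le_rfl
    have hg : f s x - supBelow f s x ≤ 0 := (le_max_right _ _).trans (hzero s)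
    linarith

lemma equicontinuous_supBelow [TopologicalSpace X] (hf1 : ∀ s x, f s x ≤ 1)
    (hf : Equicontinuous f) :
    Equicontinuous (supBelow f) := by
  intro a
  rw [Metric.equicontinuousAt_iff_pair]
  intro ε hε
  obtain ⟨V, hV, hfV⟩ := Metric.equicontinuousAt_iff_pair.1 (hf a) (ε / 2) (half_pos hε)
  refine ⟨V, hV, fun x hx y hy s => ?_⟩
  calc dist (supBelow f s x) (supBelow f s y)
      ≤ ε / 2 := abs_ciSup_sub_ciSup_le (bddAbove_range_below hf1 s x)
          (bddAbove_range_below hf1 s y) (half_pos hε).le fun t => (hfV x hx y hy t).le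
    _ < ε := half_lt_self hε

lemma equicontinuous_excessOverSupBelow [TopologicalSpace X] (hf1 : ∀ s x, f s x ≤ 1)
    (hf : Equicontinuous f) :
    Equicontinuous (excessOverSupBelow f) := by
  intro a
  rw [Metric.equicontinuousAt_iff_pair]
  intro ε hε
  obtain ⟨V, hV, hfV⟩ := Metric.equicontinuousAt_iff_pair.1 (hf a) (ε / 2) (half_pos hε)
  obtain ⟨W, hW, hMW⟩ :=
    Metric.equicontinuousAt_iff_pair.1 (equicontinuous_supBelow hf1 hf a) (ε / 2) (half_pos hε)
  refine ⟨V ∩ W, Filter.inter_mem hV hW, fun x hx y hy s => ?_⟩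
  have hfxy := hfV x hx.1 y hy.1 s
  have hMxy := hMW x hx.2 y hy.2 s
  rw [Real.dist_eq] at hfxy hMxy ⊢
  calc |excessOverSupBelow f s x - excessOverSupBelow f s y|
      ≤ |(f s x - supBelow f s x) - (f s y - supBelow f s y)| := by
        simpa only [excessOverSupBelow, max_comm (0 : ℝ)] using
          abs_max_sub_max_le_abs _ _ (0 : ℝ)
    _ = |(f s x - f s y) - (supBelow f s x - supBelow f s y)| := by ring_nf
    _ ≤ |f s x - f s y| + |supBelow f s x - supBelow f s y| := abs_sub _ _
    _ < ε := by linarith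

end SupBelow

theorem stmt_8_general {X : Type*} [TopologicalSpace X] {S : Type*}
    [LinearOrder S] [WellFoundedLT S]
    (U : S → Set X)
    (f : S → X → ℝ) (hrange : ∀ s x, f s x ∈ Set.Icc (0 : ℝ) 1)
    (hsmall : ∀ s, ∀ x ∉ U s, f s x = 0)
    (hequi : ∀ ε : ℝ, 0 < ε → ∀ a : X, ∃ V ∈ nhds a,
        ∀ s, ∀ x ∈ V, ∀ y ∈ V, |f s x - f s y| < ε)
    (hpos : ∀ x, 0 < ∑' s, ENNReal.ofReal (f s x)) :
    ∀ g : S → X → ℝ,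
      (g = fun s x => max 0 (f s x - ⨆ t : {t : S // t < s}, f t.1 x)) →
      (∀ s, Continuous (g s)) ∧
      (∀ s, ∀ x ∉ U s, g s x = 0) ∧
      (∀ ε : ℝ, 0 < ε → ∀ a : X, ∃ V ∈ nhds a,
        ∀ s, ∀ x ∈ V, ∀ y ∈ V, |g s x - g s y| < ε) ∧
      (∃ G : X → ℝ, (∀ x, HasSum (fun s => g s x) (G x)) ∧
        ∀ x, 0 < G x ∧ G x ≤ 1) := by
  rintro g rfl
  have hf0 : ∀ s x, 0 ≤ f s x := fun s x => (hrange s x).1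
  have hf1 : ∀ s x, f s x ≤ 1 := fun s x => (hrange s x).2
  have hfe : Equicontinuous f := fun a => Metric.equicontinuousAt_iff_pair.2 fun ε hε => by
    obtain ⟨V, hV, hfV⟩ := hequi ε hε a
    exact ⟨V, hV, fun x hx y hy s => hfV s x hx y hy⟩
  have hge := equicontinuous_excessOverSupBelow hf1 hfe
  have hsum (x : X) : Summable (excessOverSupBelow f · x) :=
    summable_of_sum_le (fun s => excessOverSupBelow_nonneg s x)
      (sum_excessOverSupBelow_le_one hf0 hf1 · x)
  refine ⟨hge.continuous, fun s x hx => excessOverSupBelow_eq_zero hf0 (hsmall s x hx),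
    fun ε hε a => ?_, fun x => ∑' s, excessOverSupBelow f s x, fun x => (hsum x).hasSum,
    fun x => ⟨?_, (hsum x).tsum_le_of_sum_le (sum_excessOverSupBelow_le_one hf0 hf1 · x)⟩⟩
  · obtain ⟨V, hV, hgV⟩ := Metric.equicontinuousAt_iff_pair.1 (hge a) ε hε
    exact ⟨V, hV, fun s x hx y hy => hgV x hx y hy s⟩
  · have hfpos : ∃ s, 0 < f s x := by
      by_contra! h
      simpa [ENNReal.ofReal_eq_zero.2 (h _)] using hpos x
    obtain ⟨s, hs⟩ := exists_excessOverSupBelow_pos hfpos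
    exact (hsum x).tsum_pos (fun s => excessOverSupBelow_nonneg s x) s hs

theorem stmt_8 {X : Type*} [TopologicalSpace X] {S : Type*}
    [LinearOrder S] [WellFoundedLT S]
    (U : S → Set X) (hUo : ∀ s, IsOpen (U s)) (hUc : ∀ x, ∃ s, x ∈ U s)
    (f : S → X → ℝ) (hrange : ∀ s x, f s x ∈ Set.Icc (0 : ℝ) 1)
    (hcont : ∀ s, Continuous (f s))
    (hsmall : ∀ s, ∀ x ∉ U s, f s x = 0)
    (hequi : ∀ ε : ℝ, 0 < ε → ∀ a : X, ∃ V ∈ nhds a,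
        ∀ s, ∀ x ∈ V, ∀ y ∈ V, |f s x - f s y| < ε)
    (hpos : ∀ x, 0 < ∑' s, ENNReal.ofReal (f s x)) :
    ∀ g : S → X → ℝ,
      (g = fun s x => max 0 (f s x - ⨆ t : {t : S // t < s}, f t.1 x)) →
      (∀ s, Continuous (g s)) ∧
      (∀ s, ∀ x ∉ U s, g s x = 0) ∧
      (∀ ε : ℝ, 0 < ε → ∀ a : X, ∃ V ∈ nhds a,
        ∀ s, ∀ x ∈ V, ∀ y ∈ V, |g s x - g s y| < ε) ∧
      (∃ G : X → ℝ, (∀ x, HasSum (fun s => g s x) (G x)) ∧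
        ∀ x, 0 < G x ∧ G x ≤ 1) :=
  stmt_8_general U f hrange hsmall hequi hpos
end

section
/- Suppose {f_s}_{s∈S} is a partition of a continuous function f : X → (0,∞). Then there exists a partition {f_n}_{n=1}^∞ of f by continuous functions and, for each n, a locally finite partition {f_s^n}_{s∈S} of f_n, such that for each s ∈ S the family {f_s^n}_{n=1}^∞ is a partition of f_s. -/
/-!
Cut every `f s` into dyadic height bands: the `n`-th band of `f s` is the part of its graph
between the levels `2^{-(n+1)}` and `2^{-n}` (the `0`-th band everything above `1/2`), so the
bands of `f s` add up to `f s`. Near a point `x`, finitely many `f s` already sum to within `ε`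
of `F x`; by continuity of `F` and of that finite sum, the remaining `f s` carry total mass
`< ε` on a neighbourhood of `x`, so only finitely many `f s` exceed `ε` there. Hence for fixed
`n` the bands form a locally finite family, its sum `f_n` is continuous, and `∑ₙ f_n = F` by
exchanging the order of summation of a nonnegative double series.
-/

open Filter Topology Function

theorem HasSum.of_hasSum_cols_of_nonneg {β γ : Type*} {g : β → γ → ℝ} {f : γ → ℝ} {h : β → ℝ}
    {a : ℝ} (hf : HasSum f a) (hg : ∀ b c, 0 ≤ g b c) (hcol : ∀ c, HasSum (fun b => g b c) (f c))
    (hrow : ∀ b, HasSum (g b) (h b)) : HasSum h a := by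
  have hsumm : Summable fun p : γ × β => g p.2 p.1 :=
    (summable_prod_of_nonneg fun p => hg _ _).2
      ⟨fun c => (hcol c).summable, hf.summable.congr fun c => (hcol c).tsum_eq.symm⟩
  have hswap : HasSum (fun p : γ × β => g p.2 p.1) a := by
    have := hsumm.hasSum
    rwa [(this.prod_fiberwise hcol).unique hf] at this
  exact ((Equiv.prodComm β γ).hasSum_iff.2 hswap).prod_fiberwise hrow

theorem LocallyFinite.hasSum_finsum {X S M : Type*} [TopologicalSpace X] [AddCommMonoid M]
    [TopologicalSpace M] {g : S → X → M} (hg : LocallyFinite fun s => support (g s)) (x : X) :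
    HasSum (fun s => g s x) (∑ᶠ s, g s x) := by
  have hfin : HasFiniteSupport fun s => g s x := hg.point_finite x
  rw [← tsum_eq_finsum (L := .unconditional S) hfin]
  exact (summable_of_hasFiniteSupport hfin).hasSum

theorem locallyFinite_setOf_lt_of_hasSum {X S : Type*} [TopologicalSpace X] {f : S → X → ℝ}
    {F : X → ℝ} (hcont : ∀ s, Continuous (f s)) (hnn : ∀ s x, 0 ≤ f s x) (hFc : Continuous F)
    (hsum : ∀ x, HasSum (fun s => f s x) (F x)) {ε : ℝ} (hε : 0 < ε) :
    LocallyFinite fun s => {x | ε < f s x} := by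
  intro x
  obtain ⟨T, hT⟩ : ∃ T : Finset S, F x - ε < ∑ s ∈ T, f s x :=
    ((hsum x).eventually (eventually_gt_nhds (by linarith))).exists
  -- on `U` the members outside `T` carry total mass `< ε`
  let U := {y | F y - ∑ s ∈ T, f s y < ε}
  have hU : IsOpen U :=
    isOpen_lt (hFc.sub (continuous_finsetSum T fun s _ => hcont s)) continuous_const
  have hxU : x ∈ U := by simp only [U, Set.mem_ofPred_eq]; linarith
  refine ⟨U, hU.mem_nhds hxU, T.finite_toSet.subset ?_⟩
  rintro s ⟨y, hys, hyU⟩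
  by_contra hsT
  classical
  have hle : ∑ i ∈ insert s T, f i y ≤ F y := sum_le_hasSum _ (fun i _ => hnn i y) (hsum y)
  rw [Finset.sum_insert hsT] at hle
  simp only [U, Set.mem_ofPred_eq] at hys hyU
  linarith

noncomputable def dyadicCut (n : ℕ) (a : ℝ) : ℝ :=
  if n = 0 then 0 else max (a - 2⁻¹ ^ n) 0

noncomputable def dyadicBand (n : ℕ) (a : ℝ) : ℝ :=
  dyadicCut (n + 1) a - dyadicCut n a

theorem continuous_dyadicCut (n : ℕ) : Continuous (dyadicCut n) := by
  unfold dyadicCut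
  split_ifs
  · exact continuous_const
  · fun_prop

theorem continuous_dyadicBand (n : ℕ) : Continuous (dyadicBand n) :=
  (continuous_dyadicCut _).sub (continuous_dyadicCut _)

theorem dyadicCut_nonneg (n : ℕ) (a : ℝ) : 0 ≤ dyadicCut n a := by
  unfold dyadicCut
  split_ifs
  exacts [le_rfl, le_max_right _ _]

theorem dyadicCut_le_succ (n : ℕ) (a : ℝ) : dyadicCut n a ≤ dyadicCut (n + 1) a := by
  have hpow : (2⁻¹ : ℝ) ^ (n + 1) ≤ 2⁻¹ ^ n :=
    pow_le_pow_of_le_one (by norm_num) (by norm_num) n.le_succ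
  simp only [dyadicCut, n.succ_ne_zero, if_false]
  split_ifs
  exacts [le_max_right _ _, max_le_max (by linarith) le_rfl]

theorem dyadicBand_nonneg (n : ℕ) (a : ℝ) : 0 ≤ dyadicBand n a :=
  sub_nonneg.2 (dyadicCut_le_succ n a)

theorem dyadicBand_eq_zero_of_le {n : ℕ} {a : ℝ} (ha : a ≤ 2⁻¹ ^ (n + 1)) :
    dyadicBand n a = 0 := by
  have hcut : dyadicCut (n + 1) a = 0 := by
    simp only [dyadicCut, n.succ_ne_zero, if_false]
    exact max_eq_right (by linarith)
  have hprev : dyadicCut n a = 0 :=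
    le_antisymm (hcut ▸ dyadicCut_le_succ n a) (dyadicCut_nonneg n a)
  rw [dyadicBand, hcut, hprev, sub_zero]

theorem tendsto_dyadicCut {a : ℝ} (ha : 0 ≤ a) :
    Tendsto (fun n => dyadicCut n a) atTop (𝓝 a) := by
  have hlim : Tendsto (fun n : ℕ => max (a - 2⁻¹ ^ n) 0) atTop (𝓝 (max (a - 0) 0)) :=
    (tendsto_const_nhds.sub (tendsto_pow_atTop_nhds_zero_of_lt_one (by norm_num) (by norm_num))).max
      tendsto_const_nhds
  rw [sub_zero, max_eq_left ha] at hlim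
  refine hlim.congr' ?_
  filter_upwards [eventually_ne_atTop 0] with n hn
  simp only [dyadicCut, hn, if_false]

theorem hasSum_dyadicBand {a : ℝ} (ha : 0 ≤ a) : HasSum (fun n => dyadicBand n a) a := by
  rw [hasSum_iff_tendsto_nat_of_nonneg (fun n => dyadicBand_nonneg n a)]
  refine (tendsto_dyadicCut ha).congr fun n => ?_
  simp only [dyadicBand]
  rw [Finset.sum_range_sub (fun n => dyadicCut n a)]
  simp [dyadicCut]

theorem stmt_10_general {X : Type*} [TopologicalSpace X] {S : Type*}
    (f : S → X → ℝ) (hcont : ∀ s, Continuous (f s)) (hnn : ∀ s x, 0 ≤ f s x)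
    (F : X → ℝ) (hFc : Continuous F)
    (hsum : ∀ x, HasSum (fun s => f s x) (F x)) :
    ∃ (fn : ℕ → X → ℝ) (g : ℕ → S → X → ℝ),
      (∀ n, Continuous (fn n)) ∧ (∀ n x, 0 ≤ fn n x) ∧
      (∀ n s, Continuous (g n s)) ∧ (∀ n s x, 0 ≤ g n s x) ∧
      (∀ x, HasSum (fun n => fn n x) (F x)) ∧
      (∀ n x, HasSum (fun s => g n s x) (fn n x)) ∧
      (∀ n, ∀ x : X, ∃ U ∈ nhds x, {s : S | ∃ y ∈ U, g n s y ≠ 0}.Finite) ∧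
      (∀ s x, HasSum (fun n => g n s x) (f s x)) := by
  let g : ℕ → S → X → ℝ := fun n s x => dyadicBand n (f s x)
  have hg_nonneg : ∀ n s x, 0 ≤ g n s x := fun n s x => dyadicBand_nonneg n _
  have hg_cols : ∀ s x, HasSum (fun n => g n s x) (f s x) := fun s x =>
    hasSum_dyadicBand (hnn s x)
  have hLF : ∀ n, LocallyFinite fun s => support (g n s) := fun n =>
    (locallyFinite_setOf_lt_of_hasSum hcont hnn hFc hsum (ε := 2⁻¹ ^ (n + 1))
      (by positivity)).subset fun s x hx =>
        lt_of_not_ge fun hle => hx (dyadicBand_eq_zero_of_le hle)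
  have hg_rows : ∀ n x, HasSum (fun s => g n s x) (∑ᶠ s, g n s x) := fun n =>
    (hLF n).hasSum_finsum
  refine ⟨fun n x => ∑ᶠ s, g n s x, g,
    fun n => continuous_finsum (fun s => (continuous_dyadicBand n).comp (hcont s)) (hLF n),
    fun n x => finsum_nonneg fun s => hg_nonneg n s x,
    fun n s => (continuous_dyadicBand n).comp (hcont s), hg_nonneg,
    fun x => (hsum x).of_hasSum_cols_of_nonneg (fun n s => hg_nonneg n s x) (hg_cols · x)
      (hg_rows · x),
    hg_rows, fun n x => ?_, hg_cols⟩
  obtain ⟨U, hU, hfin⟩ := hLF n x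
  exact ⟨U, hU, hfin.subset fun s ⟨y, hyU, hy⟩ => ⟨y, hy, hyU⟩⟩

theorem stmt_10 {X : Type*} [TopologicalSpace X] {S : Type*}
    (f : S → X → ℝ) (hcont : ∀ s, Continuous (f s)) (hnn : ∀ s x, 0 ≤ f s x)
    (F : X → ℝ) (hFc : Continuous F) (hFpos : ∀ x, 0 < F x)
    (hsum : ∀ x, HasSum (fun s => f s x) (F x)) :
    ∃ (fn : ℕ → X → ℝ) (g : ℕ → S → X → ℝ),
      (∀ n, Continuous (fn n)) ∧ (∀ n x, 0 ≤ fn n x) ∧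
      (∀ n s, Continuous (g n s)) ∧ (∀ n s x, 0 ≤ g n s x) ∧
      (∀ x, HasSum (fun n => fn n x) (F x)) ∧
      (∀ n x, HasSum (fun s => g n s x) (fn n x)) ∧
      (∀ n, ∀ x : X, ∃ U ∈ nhds x, {s : S | ∃ y ∈ U, g n s y ≠ 0}.Finite) ∧
      (∀ s x, HasSum (fun n => g n s x) (f s x)) :=
  stmt_10_general f hcont hnn F hFc hsum
end

section
/- Let {f_s}_{s∈S} be a partition of unity on a topological space X. Define, for each nonempty finite T ⊆ S, g_T := min_{t∈T} f_t − sup_{t∈S∖T} f_t and f'_T := |T| · max(0, g_T). Then: (1) each f'_T is continuous; (2) if f'_T(x) > 0 and f'_F(x) > 0 for some x, then T ⊆ F or F ⊆ T; (3) for each s ∈ S and x ∈ X, f_s(x) = ∑_{T ∋ s} f'_T(x)/|T|; (4) {f'_T}_{T⊆S finite, T≠∅} is itself a partition of unity on X. -/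
/-!
Fix `x` and write `a t = f t x`. For a level `c > 0` the set `{t | c < a t}` is finite, and
`f' T x / |T| = max (min_T a - sup_{S \ T} a) 0` is the length of the interval of levels `c` at
which this set equals `T`. These intervals are pairwise disjoint, and those with `s ∈ T` tile
`(0, a s)` up to a null set, which gives (3); the level sets are nested, which gives (2); summing
(3) over `s` counts each `T` exactly `|T|` times, which gives (4).

For (1), a supremum of continuous functions is lower semicontinuous; it is also upper
semicontinuous here because the tails of a family with continuous sum are locally uniformly small.
-/

open Set Filter Topology MeasureTheory

section Continuity

variable {X ι : Type*} [TopologicalSpace X] {f : ι → X → ℝ}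

lemma exists_finset_eventually_lt_of_hasSum (hcont : ∀ i, Continuous (f i))
    (h0 : ∀ i x, 0 ≤ f i x) {g : X → ℝ} (hg : Continuous g) (hsum : ∀ x, HasSum (f · x) (g x))
    (x₀ : X) {ε : ℝ} (hε : 0 < ε) :
    ∃ G : Finset ι, ∀ᶠ x in 𝓝 x₀, ∀ i ∉ G, f i x < ε := by
  classical
  obtain ⟨G, hG⟩ := ((hsum x₀).eventually (eventually_gt_nhds (sub_lt_self (g x₀) hε))).exists
  have hU : ∀ᶠ x in 𝓝 x₀, g x - ε < ∑ i ∈ G, f i x :=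
    (hg.sub continuous_const).continuousAt.eventually_lt
      (continuous_finsetSum G fun i _ => hcont i).continuousAt hG
  refine ⟨G, hU.mono fun x hx i hi => ?_⟩
  have := sum_le_hasSum (insert i G) (fun j _ => h0 j x) (hsum x)
  rw [Finset.sum_insert hi] at this
  linarith

lemma upperSemicontinuous_iSup_of_small_tails (hcont : ∀ i, Continuous (f i))
    (h0 : ∀ i x, 0 ≤ f i x) (hbdd : ∀ x, BddAbove (range fun i => f i x))
    (htail : ∀ x₀, ∀ ε > 0, ∃ G : Finset ι, ∀ᶠ x in 𝓝 x₀, ∀ i ∉ G, f i x < ε) :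
    UpperSemicontinuous fun x => ⨆ i, f i x := by
  intro x₀ y hy
  set m := ⨆ i, f i x₀
  have hm : 0 ≤ m := Real.iSup_nonneg fun i => h0 i x₀
  obtain ⟨G, hout⟩ := htail x₀ ((y - m) / 2) (by linarith)
  have hin : ∀ᶠ x in 𝓝 x₀, ∀ i ∈ G, f i x < m + (y - m) / 2 :=
    (eventually_all_finset G).mpr fun i _ => (hcont i).continuousAt.eventually_lt
      continuousAt_const ((le_ciSup (hbdd x₀) i).trans_lt (by linarith))
  filter_upwards [hin, hout] with x hin hout
  calc ⨆ i, f i x ≤ m + (y - m) / 2 := by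
        refine Real.iSup_le (fun i => ?_) (by linarith)
        by_cases hi : i ∈ G
        · exact (hin i hi).le
        · linarith [hout i hi]
    _ < y := by linarith

theorem continuous_iSup_subtype_of_hasSum (hcont : ∀ i, Continuous (f i))
    (h0 : ∀ i x, 0 ≤ f i x) {g : X → ℝ} (hg : Continuous g) (hsum : ∀ x, HasSum (f · x) (g x))
    (p : ι → Prop) :
    Continuous fun x => ⨆ i : {i // p i}, f i x := by
  classical
  have hbdd (x : X) : BddAbove (range fun i : {i // p i} => f i x) :=
    ⟨g x, by rintro _ ⟨i, rfl⟩; exact le_hasSum (hsum x) i fun j _ => h0 j x⟩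
  refine continuous_iff_lower_upperSemicontinuous.mpr
    ⟨lowerSemicontinuous_ciSup hbdd fun i => (hcont i).lowerSemicontinuous,
      upperSemicontinuous_iSup_of_small_tails (fun i => hcont i) (fun i => h0 i) hbdd
        fun x₀ ε hε => ?_⟩
  obtain ⟨G, hG⟩ := exists_finset_eventually_lt_of_hasSum hcont h0 hg hsum x₀ hε
  exact ⟨G.subtype p, hG.mono fun x hx i hi => hx i (by simpa using hi)⟩

end Continuity

section Layers

variable {S : Type*} {a : S → ℝ}

noncomputable def supCompl (a : S → ℝ) (T : Finset S) : ℝ := ⨆ t : {t : S // t ∉ T}, a t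

/-- The set of levels `c ≥ 0` at which `{t | c < a t} = T`. -/
noncomputable def layer (a : S → ℝ) (T : Finset S) (hT : T.Nonempty) : Set ℝ :=
  Ico (supCompl a T) (T.inf' hT a)

lemma volume_layer_toReal (T : Finset S) (hT : T.Nonempty) :
    (volume (layer a T hT)).toReal = max (T.inf' hT a - supCompl a T) 0 := by
  rw [layer, Real.volume_Ico, ENNReal.toReal_ofReal']

lemma supCompl_nonneg (ha : 0 ≤ a) (T : Finset S) : 0 ≤ supCompl a T :=
  Real.iSup_nonneg fun t => ha t

lemma le_supCompl (hbdd : BddAbove (range a)) {T : Finset S} {t : S} (ht : t ∉ T) :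
    a t ≤ supCompl a T :=
  le_ciSup (hbdd.mono (range_comp_subset_range Subtype.val a)) ⟨t, ht⟩

lemma mem_iff_lt_of_mem_layer (hbdd : BddAbove (range a)) {T : Finset S} {hT : T.Nonempty}
    {c : ℝ} (hc : c ∈ layer a T hT) (t : S) : t ∈ T ↔ c < a t :=
  ⟨fun ht => hc.2.trans_le (T.inf'_le a ht),
    fun hlt => by_contra fun ht => ((le_supCompl hbdd ht).trans hc.1).not_gt hlt⟩

lemma mem_layer_of_forall_mem_iff {T : Finset S} (hT : T.Nonempty) {c : ℝ} (hc : 0 ≤ c)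
    (h : ∀ t, t ∈ T ↔ c < a t) : c ∈ layer a T hT :=
  ⟨Real.iSup_le (fun t => not_lt.mp fun hlt => t.2 ((h t).mpr hlt)) hc,
    (Finset.lt_inf'_iff hT).mpr fun t ht => (h t).mp ht⟩

lemma eq_of_mem_layer (hbdd : BddAbove (range a)) {T F : Finset S} {hT : T.Nonempty}
    {hF : F.Nonempty} {c : ℝ} (hcT : c ∈ layer a T hT) (hcF : c ∈ layer a F hF) : T = F :=
  Finset.ext fun t =>
    (mem_iff_lt_of_mem_layer hbdd hcT t).trans (mem_iff_lt_of_mem_layer hbdd hcF t).symm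

lemma subset_or_subset_of_mem_layer (hbdd : BddAbove (range a)) {T F : Finset S}
    {hT : T.Nonempty} {hF : F.Nonempty} {c d : ℝ} (hc : c ∈ layer a T hT)
    (hd : d ∈ layer a F hF) : T ⊆ F ∨ F ⊆ T := by
  rcases le_total c d with hcd | hdc
  · exact Or.inr fun t ht => (mem_iff_lt_of_mem_layer hbdd hc t).mpr
      (hcd.trans_lt ((mem_iff_lt_of_mem_layer hbdd hd t).mp ht))
  · exact Or.inl fun t ht => (mem_iff_lt_of_mem_layer hbdd hd t).mpr
      (hdc.trans_lt ((mem_iff_lt_of_mem_layer hbdd hc t).mp ht))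

lemma finite_setOf_le (hs : Summable a) {δ : ℝ} (hδ : 0 < δ) : {t | δ ≤ a t}.Finite := by
  simpa using eventually_cofinite.mp (hs.tendsto_cofinite_zero.eventually (gt_mem_nhds hδ))

lemma tsum_volume_layer_le (ha : 0 ≤ a) (hbdd : BddAbove (range a)) (s : S) :
    ∑' T : {T : Finset S // s ∈ T}, volume (layer a T.1 ⟨s, T.2⟩) ≤ ENNReal.ofReal (a s) :=
  calc ∑' T : {T : Finset S // s ∈ T}, volume (layer a T.1 ⟨s, T.2⟩)
      ≤ volume (⋃ T : {T : Finset S // s ∈ T}, layer a T.1 ⟨s, T.2⟩) :=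
        tsum_meas_le_meas_iUnion_of_disjoint _ (fun _ => measurableSet_Ico) fun T F hTF =>
          disjoint_left.mpr fun c hT hF => hTF (Subtype.ext (eq_of_mem_layer hbdd hT hF))
    _ ≤ volume (Ico 0 (a s)) := measure_mono <| iUnion_subset fun T =>
        Ico_subset_Ico (supCompl_nonneg ha T.1) (T.1.inf'_le a T.2)
    _ = ENNReal.ofReal (a s) := by rw [Real.volume_Ico, sub_zero]

lemma ofReal_sub_le_tsum_volume_layer (hs : Summable a) (s : S) {δ : ℝ} (hδ : 0 < δ) :
    ENNReal.ofReal (a s - δ) ≤ ∑' T : {T : Finset S // s ∈ T}, volume (layer a T.1 ⟨s, T.2⟩) := by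
  set Fδ := (finite_setOf_le hs hδ).toFinset
  set P : Set {T : Finset S // s ∈ T} := Subtype.val ⁻¹' (Fδ.powerset : Set (Finset S))
  have hP : P.Finite := Fδ.powerset.finite_toSet.preimage Subtype.val_injective.injOn
  have hcover : Ico δ (a s) ⊆ ⋃ T ∈ P, layer a T.1 ⟨s, T.2⟩ := by
    rintro c ⟨hδc, hcs⟩
    have hfin : {t | c < a t}.Finite :=
      (finite_setOf_le hs hδ).subset fun t ht => hδc.trans (le_of_lt ht)
    refine mem_biUnion (x := ⟨hfin.toFinset, hfin.mem_toFinset.mpr hcs⟩) ?_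
      (mem_layer_of_forall_mem_iff _ (hδ.le.trans hδc) fun t => hfin.mem_toFinset)
    simpa [P, Fδ, Set.subset_def] using fun t (ht : c < a t) => hδc.trans ht.le
  calc ENNReal.ofReal (a s - δ) = volume (Ico δ (a s)) := Real.volume_Ico.symm
    _ ≤ volume (⋃ T ∈ P, layer a T.1 ⟨s, T.2⟩) := measure_mono hcover
    _ ≤ ∑' T : P, volume (layer a T.1.1 ⟨s, T.1.2⟩) := measure_biUnion_le volume hP.countable _
    _ ≤ _ := ENNReal.tsum_comp_le_tsum_of_injective Subtype.val_injective _

lemma tsum_volume_layer (ha : 0 ≤ a) (hs : Summable a) (s : S) :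
    ∑' T : {T : Finset S // s ∈ T}, volume (layer a T.1 ⟨s, T.2⟩) = ENNReal.ofReal (a s) := by
  have hbdd : BddAbove (range a) :=
    ⟨∑' t, a t, by rintro _ ⟨t, rfl⟩; exact hs.le_tsum t fun j _ => ha j⟩
  have hlim : Tendsto (fun δ => ENNReal.ofReal (a s - δ)) (𝓝[>] 0) (𝓝 (ENNReal.ofReal (a s))) := by
    have : Tendsto (fun δ : ℝ => ENNReal.ofReal (a s - δ)) (𝓝 0)
        (𝓝 (ENNReal.ofReal (a s - 0))) :=
      (ENNReal.continuous_ofReal.comp (continuous_const.sub continuous_id)).tendsto 0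
    simpa using this.mono_left (nhdsWithin_le_nhds (s := Ioi (0 : ℝ)))
  exact le_antisymm (tsum_volume_layer_le ha hbdd s) (le_of_tendsto hlim
    (eventually_nhdsWithin_of_forall fun δ hδ => ofReal_sub_le_tsum_volume_layer hs s hδ))

theorem hasSum_volume_layer_toReal (ha : 0 ≤ a) (hs : Summable a) (s : S) :
    HasSum (fun T : {T : Finset S // s ∈ T} => (volume (layer a T.1 ⟨s, T.2⟩)).toReal) (a s) := by
  have h := tsum_volume_layer ha hs s
  have := ENNReal.hasSum_toReal (h ▸ ENNReal.ofReal_ne_top)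
  rwa [← ENNReal.tsum_toReal_eq (f := fun T : {T : Finset S // s ∈ T} =>
    volume (layer a T.1 ⟨s, T.2⟩)) fun T => measure_Ico_lt_top.ne, h,
    ENNReal.toReal_ofReal (ha s)] at this

theorem hasSum_card_mul_volume_layer_toReal (ha : 0 ≤ a) {σ : ℝ} (hσ : HasSum a σ) :
    HasSum (fun T : {T : Finset S // T.Nonempty} =>
      T.1.card * (volume (layer a T.1 T.2)).toReal) σ := by
  set F : (Σ s : S, {T : Finset S // s ∈ T}) → ℝ :=
    fun p => (volume (layer a p.2.1 ⟨p.1, p.2.2⟩)).toReal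
  have hfib (s : S) : HasSum (fun T => F ⟨s, T⟩) (a s) :=
    hasSum_volume_layer_toReal ha hσ.summable s
  have hF : HasSum F σ := hσ.sigma_of_hasSum hfib <|
    (summable_sigma_of_nonneg fun _ => ENNReal.toReal_nonneg).mpr
      ⟨fun s => (hfib s).summable, hσ.summable.congr fun s => (hfib s).tsum_eq.symm⟩
  let e : (Σ T : {T : Finset S // T.Nonempty}, T.1) ≃ (Σ s : S, {T : Finset S // s ∈ T}) :=
    { toFun := fun q => ⟨q.2.1, q.1.1, q.2.2⟩
      invFun := fun p => ⟨⟨p.2.1, p.1, p.2.2⟩, p.1, p.2.2⟩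
      left_inv := fun _ => rfl
      right_inv := fun _ => rfl }
  refine (e.hasSum_iff.mpr hF).sigma fun T => ?_
  have := hasSum_fintype fun _ : T.1 => (volume (layer a T.1 T.2)).toReal
  rwa [Finset.sum_const, Finset.card_univ, Fintype.card_coe, nsmul_eq_mul] at this

end Layers

theorem stmt_11 {X : Type*} [TopologicalSpace X] {S : Type*}
    (f : S → X → ℝ) (hcont : ∀ s, Continuous (f s))
    (hrange : ∀ s x, f s x ∈ Set.Icc (0 : ℝ) 1)
    (hsum : ∀ x, HasSum (fun s => f s x) 1)
    (f' : Finset S → X → ℝ)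
    (hf' : ∀ (T : Finset S) (hT : T.Nonempty) (x : X),
      f' T x = T.card *
        max (T.inf' hT (fun t => f t x) - ⨆ t : {t : S // t ∉ T}, f t.1 x) 0) :
    (∀ T : Finset S, T.Nonempty → Continuous (f' T)) ∧
    (∀ T F : Finset S, T.Nonempty → F.Nonempty → ∀ x : X,
      0 < f' T x → 0 < f' F x → T ⊆ F ∨ F ⊆ T) ∧
    (∀ s : S, ∀ x : X,
      HasSum (fun T : {T : Finset S // s ∈ T} => f' T.1 x / T.1.card) (f s x)) ∧
    (∀ x : X, HasSum (fun T : {T : Finset S // T.Nonempty} => f' T.1 x) 1) := by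
  have h0 (x : X) : 0 ≤ fun t => f t x := fun t => (hrange t x).1
  have hbdd (x : X) : BddAbove (range fun t => f t x) :=
    ⟨1, by rintro _ ⟨t, rfl⟩; exact (hrange t x).2⟩
  have hlayer (T : Finset S) (hT : T.Nonempty) (x : X) :
      f' T x = T.card * (volume (layer (f · x) T hT)).toReal := by
    rw [hf', volume_layer_toReal]; rfl
  have hne {T : Finset S} (hT : T.Nonempty) {x : X} (h : 0 < f' T x) :
      (layer (f · x) T hT).Nonempty := by
    rw [hlayer T hT x] at h
    exact nonempty_of_measure_ne_zero
      (ENNReal.toReal_pos_iff.mp (pos_of_mul_pos_right h (Nat.cast_nonneg _))).1.ne'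
  refine ⟨fun T hT => ?_, fun T F hT hF x hTx hFx => ?_, fun s x => ?_, fun x => ?_⟩
  · rw [funext (hf' T hT)]
    exact continuous_const.mul <| ((Continuous.finset_inf'_apply hT fun t _ => hcont t).sub
      (continuous_iSup_subtype_of_hasSum hcont (fun t x => h0 x t) continuous_const hsum _)).max
      continuous_const
  · obtain ⟨c, hc⟩ := hne hT hTx
    obtain ⟨d, hd⟩ := hne hF hFx
    exact subset_or_subset_of_mem_layer (hbdd x) hc hd
  · refine (hasSum_volume_layer_toReal (h0 x) (hsum x).summable s).congr_fun fun T => ?_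
    have hcard : (T.1.card : ℝ) ≠ 0 := Nat.cast_ne_zero.mpr (Finset.card_pos.mpr ⟨s, T.2⟩).ne'
    rw [hlayer T.1 ⟨s, T.2⟩, mul_div_cancel_left₀ _ hcard]
  · exact (hasSum_card_mul_volume_layer_toReal (h0 x) (hsum x)).congr_fun fun T =>
      hlayer T.1 T.2 x
end

section
/- Let {f_s}_{s∈S} be a partition of unity on X with derivative {f'_T}_{T⊆S}. Define open covers 𝒰 = {U_T}, U_T := (f'_T)^{-1}(0,1], and 𝒱 = {V_s}, V_s := f_s^{-1}(0,1]. Then for every x ∈ X there exists s ∈ S such that the union of all U_T containing x is contained in V_s (i.e., stars of 𝒰 at points refine 𝒱). -/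
/-!
Fix `x` and let `s` maximise `t ↦ f t x`; a maximiser exists because these values are summable
with sum `1`, so only finitely many exceed any given positive one. If `f' T x > 0`, every member
of `T` beats every non-member at `x`, so the maximiser `s` lies in `T`. If moreover
`f' T y > 0`, then `f s y ≥ min_T f(y) > sup_{S∖T} f(y) ≥ 0`.
-/

theorem HasSum.exists_pos_of_pos {S : Type*} {g : S → ℝ} {a : ℝ} (hg : HasSum g a)
    (ha : 0 < a) : ∃ s, 0 < g s := by
  by_contra! h
  linarith [hasSum_le h hg hasSum_zero]

theorem Summable.exists_forall_le_of_pos {S : Type*} {g : S → ℝ} (hg : Summable g) {s₀ : S}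
    (hs₀ : 0 < g s₀) : ∃ s, ∀ t, g t ≤ g s := by
  have hfin : {t | g s₀ ≤ g t}.Finite := by
    have hsmall : ∀ᶠ t in Filter.cofinite, g t < g s₀ :=
      hg.tendsto_cofinite_zero.eventually (gt_mem_nhds hs₀)
    simpa [Filter.eventually_cofinite, not_lt] using hsmall
  obtain ⟨s, hs, hmax⟩ := Finset.exists_max_image hfin.toFinset g ⟨s₀, by simp⟩
  refine ⟨s, fun t => ?_⟩
  rcases le_or_gt (g s₀) (g t) with ht | ht
  · exact hmax t (by simpa using ht)
  · exact ht.le.trans (hmax s₀ (by simp))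

namespace Finset

variable {S : Type*} {g : S → ℝ} {T : Finset S} (hT : T.Nonempty)

theorem iSup_compl_lt_inf'_of_mul_max_pos {c : ℝ}
    (h : 0 < c * max (T.inf' hT g - ⨆ t : {t : S // t ∉ T}, g t.1) 0) :
    ⨆ t : {t : S // t ∉ T}, g t.1 < T.inf' hT g := by
  by_contra! hle
  rw [max_eq_right (by linarith), mul_zero] at h
  exact h.false

theorem mem_of_iSup_compl_lt_inf' {s : S} (hs : ∀ t, g t ≤ g s)
    (h : ⨆ t : {t : S // t ∉ T}, g t.1 < T.inf' hT g) : s ∈ T := by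
  by_contra hsT
  have hbdd : BddAbove (Set.range fun t : {t : S // t ∉ T} => g t.1) :=
    ⟨g s, by rintro _ ⟨t, rfl⟩; exact hs t⟩
  have hout : g s ≤ ⨆ t : {t : S // t ∉ T}, g t.1 := le_ciSup hbdd ⟨s, hsT⟩
  have hin : T.inf' hT g ≤ g s := (inf'_le g hT.choose_spec).trans (hs _)
  linarith

theorem pos_of_mem_of_iSup_compl_lt_inf' (hg : ∀ t, 0 ≤ g t) {s : S} (hs : s ∈ T)
    (h : ⨆ t : {t : S // t ∉ T}, g t.1 < T.inf' hT g) : 0 < g s :=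
  calc 0 ≤ ⨆ t : {t : S // t ∉ T}, g t.1 := Real.iSup_nonneg fun t => hg t.1
    _ < T.inf' hT g := h
    _ ≤ g s := inf'_le g hs

end Finset

theorem stmt_12_general {X : Type*} {S : Type*}
    (f : S → X → ℝ)
    (hrange : ∀ s x, f s x ∈ Set.Icc (0 : ℝ) 1)
    (hsum : ∀ x, HasSum (fun s => f s x) 1)
    (f' : Finset S → X → ℝ)
    (hf' : ∀ (T : Finset S) (hT : T.Nonempty) (x : X),
      f' T x = T.card *
        max (T.inf' hT (fun t => f t x) - ⨆ t : {t : S // t ∉ T}, f t.1 x) 0) :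
    ∀ x : X, ∃ s : S, ∀ T : Finset S, T.Nonempty →
      0 < f' T x → ∀ y : X, 0 < f' T y → 0 < f s y := by
  intro x
  obtain ⟨s₀, hs₀⟩ := (hsum x).exists_pos_of_pos one_pos
  obtain ⟨s, hs⟩ := (hsum x).summable.exists_forall_le_of_pos hs₀
  refine ⟨s, fun T hT hTx y hTy => ?_⟩
  rw [hf' T hT] at hTx hTy
  have hsT : s ∈ T :=
    T.mem_of_iSup_compl_lt_inf' hT hs (T.iSup_compl_lt_inf'_of_mul_max_pos hT hTx)
  exact T.pos_of_mem_of_iSup_compl_lt_inf' hT (fun t => (hrange t y).1) hsT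
    (T.iSup_compl_lt_inf'_of_mul_max_pos hT hTy)

theorem stmt_12 {X : Type*} [TopologicalSpace X] {S : Type*}
    (f : S → X → ℝ) (hcont : ∀ s, Continuous (f s))
    (hrange : ∀ s x, f s x ∈ Set.Icc (0 : ℝ) 1)
    (hsum : ∀ x, HasSum (fun s => f s x) 1)
    (f' : Finset S → X → ℝ)
    (hf' : ∀ (T : Finset S) (hT : T.Nonempty) (x : X),
      f' T x = T.card *
        max (T.inf' hT (fun t => f t x) - ⨆ t : {t : S // t ∉ T}, f t.1 x) 0) :
    ∀ x : X, ∃ s : S, ∀ T : Finset S, T.Nonempty →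
      0 < f' T x → ∀ y : X, 0 < f' T y → 0 < f s y :=
  stmt_12_general f hrange hsum f' hf'
end

section
/- Let {f_s}_{s∈S} be a partition of unity on a space X with derivative {f'_T}_{T⊆S}. Then the order of {f_s}_{s∈S} is at most n (i.e., for each x ∈ X at most n+1 of the values f_s(x) are positive) if and only if f'_T ≡ 0 for every finite subset T of S with at least n+2 elements. -/
/-!
If at most `n + 1` of the `f s x` are positive, every `T` with `n + 2` elements contains some `t`
with `f t x = 0`, so the minimum over `T` cannot exceed the (nonnegative) supremum outside `T`.
Conversely, if `f t x ≥ m > 0` on such a `T`, summability makes `A = {s | m ≤ f s x}` finite and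
keeps the values below `m` bounded away from `m`, so `f'_A x > 0` with `T ⊆ A`.
-/

open Filter Finset Topology

section
variable {S : Type*} {g : S → ℝ}

theorem inf'_le_iSup_compl_of_exists_nonpos (hg : ∀ s, 0 ≤ g s) {T : Finset S} (hT : T.Nonempty)
    (h : ∃ t ∈ T, g t ≤ 0) : T.inf' hT g ≤ ⨆ s : {s // s ∉ T}, g s :=
  ((inf'_le_iff hT).2 h).trans (Real.iSup_nonneg fun s => hg s)

theorem exists_le_lt_forall_lt_imp_le_of_tendsto_cofinite_zero
    (hg : Tendsto g cofinite (𝓝 0)) {m : ℝ} (hm : 0 < m) :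
    ∃ c, 0 ≤ c ∧ c < m ∧ ∀ s, g s < m → g s ≤ c := by
  have hfin : {s | ¬ g s < m / 2}.Finite :=
    eventually_cofinite.mp (hg.eventually (gt_mem_nhds (half_pos hm)))
  -- only the finitely many values in `[m / 2, m)` can come close to `m`
  set V := insert (m / 2) ((hfin.toFinset.filter (g · < m)).image g)
  refine ⟨V.max' (insert_nonempty _ _), ?_, ?_, fun s hs => ?_⟩
  · exact (half_pos hm).le.trans (le_max' _ _ (mem_insert_self _ _))
  · rw [max'_lt_iff]
    simp only [V, mem_insert, mem_image, mem_filter, forall_eq_or_imp, forall_exists_index,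
      and_imp]
    exact ⟨half_lt_self hm, fun _ s _ hs h => h ▸ hs⟩
  · by_cases hsmall : g s < m / 2
    · exact hsmall.le.trans (le_max' _ _ (mem_insert_self _ _))
    · exact le_max' _ _ (mem_insert_of_mem (mem_image_of_mem _ (by simpa [hs] using hsmall)))

theorem exists_superset_iSup_compl_lt_inf' (hg : Tendsto g cofinite (𝓝 0)) {T : Finset S}
    (hT : T.Nonempty) (hpos : ∀ t ∈ T, 0 < g t) :
    ∃ (A : Finset S) (hA : A.Nonempty), T ⊆ A ∧ ⨆ s : {s // s ∉ A}, g s < A.inf' hA g := by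
  set m := T.inf' hT g
  have hm : 0 < m := (lt_inf'_iff hT).2 hpos
  have hfin : {s | m ≤ g s}.Finite := by
    simpa using eventually_cofinite.mp (hg.eventually (gt_mem_nhds hm))
  have hTA : T ⊆ hfin.toFinset := fun t ht => by simpa using inf'_le g ht
  obtain ⟨c, hc0, hcm, hc⟩ := exists_le_lt_forall_lt_imp_le_of_tendsto_cofinite_zero hg hm
  refine ⟨_, hT.mono hTA, hTA, ?_⟩
  calc ⨆ s : {s // s ∉ hfin.toFinset}, g s ≤ c :=
        Real.iSup_le (fun s => hc s (by simpa using s.2)) hc0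
    _ < m := hcm
    _ ≤ _ := le_inf' _ _ fun s hs => by simpa using hs

end

theorem natCast_mul_max_zero_eq_zero_iff {k : ℕ} (hk : k ≠ 0) {a : ℝ} :
    (k : ℝ) * max a 0 = 0 ↔ a ≤ 0 := by
  simp [hk]

theorem stmt_13_general {X : Type*} {S : Type*} (n : ℕ)
    (f : S → X → ℝ)
    (hrange : ∀ s x, f s x ∈ Set.Icc (0 : ℝ) 1)
    (hsum : ∀ x, HasSum (fun s => f s x) 1)
    (f' : Finset S → X → ℝ)
    (hf' : ∀ (T : Finset S) (hT : T.Nonempty) (x : X),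
      f' T x = T.card *
        max (T.inf' hT (fun t => f t x) - ⨆ t : {t : S // t ∉ T}, f t.1 x) 0) :
    (∀ x : X, ∀ T : Finset S, (∀ s ∈ T, 0 < f s x) → T.card ≤ n + 1) ↔
    (∀ T : Finset S, T.Nonempty → n + 2 ≤ T.card → ∀ x : X, f' T x = 0) := by
  refine ⟨fun h T hT hcard x => ?_, fun h x T hpos => ?_⟩
  · rw [hf', natCast_mul_max_zero_eq_zero_iff hT.card_pos.ne', sub_nonpos]
    refine inf'_le_iSup_compl_of_exists_nonpos (fun s => (hrange s x).1) hT ?_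
    by_contra! hall
    have := h x T hall
    omega
  · by_contra! hcard
    obtain ⟨A, hA, hTA, hlt⟩ := exists_superset_iSup_compl_lt_inf'
      (hsum x).summable.tendsto_cofinite_zero (card_pos.1 (by omega)) hpos
    have hzero := h A hA (hcard.trans_le (card_le_card hTA)) x
    rw [hf' A hA, natCast_mul_max_zero_eq_zero_iff hA.card_pos.ne', sub_nonpos] at hzero
    exact hzero.not_gt hlt

theorem stmt_13 {X : Type*} [TopologicalSpace X] {S : Type*} (n : ℕ)
    (f : S → X → ℝ) (hcont : ∀ s, Continuous (f s))
    (hrange : ∀ s x, f s x ∈ Set.Icc (0 : ℝ) 1)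
    (hsum : ∀ x, HasSum (fun s => f s x) 1)
    (f' : Finset S → X → ℝ)
    (hf' : ∀ (T : Finset S) (hT : T.Nonempty) (x : X),
      f' T x = T.card *
        max (T.inf' hT (fun t => f t x) - ⨆ t : {t : S // t ∉ T}, f t.1 x) 0) :
    (∀ x : X, ∀ T : Finset S, (∀ s ∈ T, 0 < f s x) → T.card ≤ n + 1) ↔
    (∀ T : Finset S, T.Nonempty → n + 2 ≤ T.card → ∀ x : X, f' T x = 0) :=
  stmt_13_general n f hrange hsum f' hf'
end

section
/- Let f = {f_s}_{s∈S} be a partition of unity on a metrizable space X with derivative {f'_T}. For fixed integers m, n ≥ 1, the family of sets U_{T,m} := {x ∈ X : f'_T(x) > 1/m}, where T ranges over subsets of S with exactly n elements, is discrete: every point of X has a neighborhood meeting at most one of these sets. Consequently, every open cover of a metrizable space has a σ-discrete open refinement. -/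
/-!
Since the `f s` are nonnegative and sum to `1`, all but finitely many of them are small near any
point, so the whole family is uniformly continuous at every point `x`: `|f s y - f s x| < ε` for
all `s` at once, for `y` near `x`. If `f'_T y > 1/m` with `|T| = n`, then at `y` every `f t` with
`t ∈ T` exceeds every `f s` with `s ∉ T` by more than `1/(mn)`. Two different `T₁`, `T₂` of size
`n` contain `t₁ ∈ T₁ \ T₂` and `t₂ ∈ T₂ \ T₁`, whose values are ordered one way at `y₁` and the
other way at `y₂`, with margin `1/(mn)`; this cannot happen if all `f s` vary by less than
`1/(2mn)` near `x`.

For the refinement take a partition of unity subordinate to the cover. At each `x` the indices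
where `f s x` is maximal form a finite set `T` separated from the other values by a positive gap,
which persists near `x`; so `x` lies in the interior of some `U_{T,m}`, and `U_{T,m} ⊆ supp f_t`
for `t ∈ T`.
-/

open Topology Filter Set

/-- The derivative `f'_T` of the partition of unity `f`, with junk value `0` at `T = ∅`. -/
noncomputable def derivPOU {X S : Type*} (f : S → X → ℝ) (T : Finset S) (x : X) : ℝ :=
  if h : T.Nonempty then
    T.card * max (T.inf' h (fun t => f t x) - ⨆ t : {t : S // t ∉ T}, f t.1 x) 0
  else 0

section Gap

variable {S : Type*}

theorem iSup_add_div_card_lt_inf' {φ : S → ℝ} {T : Finset S} (hT : T.Nonempty) {r : ℝ}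
    (hr : 0 ≤ r) (h : r < T.card * max (T.inf' hT φ - ⨆ s : {s // s ∉ T}, φ s) 0) :
    (⨆ s : {s // s ∉ T}, φ s) + r / T.card < T.inf' hT φ := by
  have hcard : (0 : ℝ) < T.card := by exact_mod_cast hT.card_pos
  have hmax : 0 < max (T.inf' hT φ - ⨆ s : {s // s ∉ T}, φ s) 0 :=
    pos_of_mul_pos_right (hr.trans_lt h) hcard.le
  rw [max_eq_left_of_lt (by simpa using hmax)] at h
  linarith [(div_lt_iff₀' hcard).2 h]

theorem Finset.eq_of_forall_add_lt_of_abs_sub_le {φ ψ : S → ℝ} {T₁ T₂ : Finset S} {δ : ℝ}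
    (hcard : T₁.card = T₂.card) (hφψ : ∀ s, |φ s - ψ s| ≤ δ)
    (h₁ : ∀ t ∈ T₁, ∀ s ∉ T₁, φ s + δ < φ t) (h₂ : ∀ t ∈ T₂, ∀ s ∉ T₂, ψ s + δ < ψ t) :
    T₁ = T₂ := by
  by_contra hne
  obtain ⟨t₁, ht₁, ht₁₂⟩ := not_subset.1 fun h => hne (eq_of_subset_of_card_le h hcard.ge)
  obtain ⟨t₂, ht₂, ht₂₁⟩ := not_subset.1 fun h => hne (eq_of_subset_of_card_le h hcard.le).symm
  have := h₁ t₁ ht₁ t₂ ht₂₁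
  have := h₂ t₂ ht₂ t₁ ht₁₂
  have := abs_le.1 (hφψ t₁)
  have := abs_le.1 (hφψ t₂)
  linarith

theorem exists_finset_gap_of_tendsto_cofinite_zero {φ : S → ℝ} (hφ : Tendsto φ cofinite (𝓝 0))
    {s₀ : S} (hs₀ : 0 < φ s₀) :
    ∃ T : Finset S, T.Nonempty ∧ ∃ ρ c : ℝ, 0 ≤ ρ ∧ ρ < c ∧
      (∀ t ∈ T, c ≤ φ t) ∧ ∀ s ∉ T, φ s ≤ ρ := by
  classical
  set ε := φ s₀ / 2
  have hε : 0 < ε := half_pos hs₀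
  -- only finitely many values reach `ε`, so the largest one is isolated from the rest
  have hfin : {s | ¬φ s < ε}.Finite := eventually_cofinite.1 (hφ.eventually (gt_mem_nhds hε))
  set F := hfin.toFinset
  have hs₀F : s₀ ∈ F := hfin.mem_toFinset.2 (by simp [ε]; linarith)
  set c := F.sup' ⟨s₀, hs₀F⟩ φ
  set T := F.filter (φ · = c)
  set A : Finset ℝ := insert ε ((F.filter (φ · ≠ c)).image φ)
  set ρ := A.max' (Finset.insert_nonempty _ _)
  have hεc : ε < c := by
    have : φ s₀ ≤ c := F.le_sup' φ hs₀F
    simp only [ε]; linarith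
  refine ⟨T, ?_, ρ, c, hε.le.trans (A.le_max' ε (Finset.mem_insert_self _ _)), ?_, ?_, ?_⟩
  · obtain ⟨t, ht, htc⟩ := F.exists_mem_eq_sup' ⟨s₀, hs₀F⟩ φ
    exact ⟨t, Finset.mem_filter.2 ⟨ht, htc.symm⟩⟩
  · refine (A.max'_lt_iff _).2 fun a ha => ?_
    rcases Finset.mem_insert.1 ha with rfl | ha
    · exact hεc
    · obtain ⟨s, hs, rfl⟩ := Finset.mem_image.1 ha
      obtain ⟨hsF, hsc⟩ := Finset.mem_filter.1 hs
      exact (F.le_sup' φ hsF).lt_of_ne hsc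
  · intro t ht
    exact (Finset.mem_filter.1 ht).2.ge
  · intro s hs
    by_cases hsF : s ∈ F
    · have hsc : φ s ≠ c := fun h => hs (Finset.mem_filter.2 ⟨hsF, h⟩)
      exact A.le_max' _ (Finset.mem_insert_of_mem
        (Finset.mem_image_of_mem φ (Finset.mem_filter.2 ⟨hsF, hsc⟩)))
    · have : φ s < ε := by simpa [F] using hsF
      exact this.le.trans (A.le_max' ε (Finset.mem_insert_self _ _))

end Gap

section Derivative

variable {X S : Type*} {f : S → X → ℝ} {T : Finset S} {x : X}

theorem derivPOU_of_nonempty (hT : T.Nonempty) :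
    derivPOU f T x =
      T.card * max (T.inf' hT (fun t => f t x) - ⨆ t : {t : S // t ∉ T}, f t.1 x) 0 :=
  dif_pos hT

theorem sub_le_derivPOU (hT : T.Nonempty) {ρ c : ℝ} (hρ : 0 ≤ ρ) (hc : ∀ t ∈ T, c ≤ f t x)
    (hρc : ∀ s ∉ T, f s x ≤ ρ) : c - ρ ≤ derivPOU f T x := by
  have hinf : c ≤ T.inf' hT (fun t => f t x) := T.le_inf' hT _ hc
  have hsup : ⨆ s : {s : S // s ∉ T}, f s.1 x ≤ ρ := Real.iSup_le (fun s => hρc s s.2) hρ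
  have hcard : (1 : ℝ) ≤ T.card := by exact_mod_cast hT.card_pos
  rw [derivPOU_of_nonempty hT]
  calc c - ρ ≤ max (T.inf' hT (fun t => f t x) - ⨆ t : {t : S // t ∉ T}, f t.1 x) 0 :=
        le_max_of_le_left (by linarith)
    _ ≤ _ := le_mul_of_one_le_left (le_max_right _ _) hcard

theorem add_div_card_lt_of_lt_derivPOU (hbdd : BddAbove (range fun s => f s x)) {r : ℝ}
    (hr : 0 ≤ r) (h : r < derivPOU f T x) {t s : S} (ht : t ∈ T) (hs : s ∉ T) :
    f s x + r / T.card < f t x := by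
  have hT : T.Nonempty := ⟨t, ht⟩
  rw [derivPOU_of_nonempty hT] at h
  have hsup : f s x ≤ ⨆ s : {s : S // s ∉ T}, f s.1 x :=
    le_ciSup (hbdd.mono (range_subset_iff.2 fun s => mem_range_self s.1))
      (⟨s, hs⟩ : {s // s ∉ T})
  linarith [iSup_add_div_card_lt_inf' hT hr h, T.inf'_le (fun t => f t x) ht]

theorem pos_of_lt_derivPOU (hf : ∀ s, 0 ≤ f s x) {r : ℝ} (hr : 0 ≤ r)
    (h : r < derivPOU f T x) {t : S} (ht : t ∈ T) : 0 < f t x := by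
  have hT : T.Nonempty := ⟨t, ht⟩
  rw [derivPOU_of_nonempty hT] at h
  have : 0 ≤ r / T.card := by positivity
  linarith [iSup_add_div_card_lt_inf' hT hr h, T.inf'_le (fun t => f t x) ht,
    Real.iSup_nonneg fun s : {s // s ∉ T} => hf s]

end Derivative

section PartitionOfUnity

variable {X S : Type*} [TopologicalSpace X] {f : S → X → ℝ}

theorem le_one_sub_sum_of_notMem {φ : S → ℝ} (hφ : ∀ s, 0 ≤ φ s) (hsum : HasSum φ 1)
    {F : Finset S} {s : S} (hs : s ∉ F) : φ s ≤ 1 - ∑ t ∈ F, φ t := by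
  classical
  have := sum_le_hasSum (insert s F) (fun t _ => hφ t) hsum
  rw [Finset.sum_insert hs] at this
  linarith

theorem eventually_forall_abs_sub_lt (hcont : ∀ s, Continuous (f s))
    (hnonneg : ∀ s x, 0 ≤ f s x) (hsum : ∀ x, HasSum (fun s => f s x) 1) (x : X) {ε : ℝ}
    (hε : 0 < ε) : ∀ᶠ y in 𝓝 x, ∀ s, |f s y - f s x| < ε := by
  -- a finite `F` carries all but `ε / 2` of the mass at `x`, hence all but `ε` nearby
  obtain ⟨F, hF⟩ : ∃ F : Finset S, 1 - ε / 2 < ∑ s ∈ F, f s x :=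
    ((hsum x).eventually (eventually_gt_nhds (by linarith))).exists
  have hmass : ∀ᶠ y in 𝓝 x, 1 - ε < ∑ s ∈ F, f s y :=
    (continuous_finsetSum F fun s _ => hcont s).continuousAt.eventually
      (eventually_gt_nhds (by linarith))
  have hnear : ∀ᶠ y in 𝓝 x, ∀ s ∈ F, |f s y - f s x| < ε :=
    (eventually_all_finset F).2 fun s _ =>
      (hcont s).continuousAt.eventually (Metric.ball_mem_nhds (f s x) hε)
  filter_upwards [hmass, hnear] with y hy hyF s
  by_cases hs : s ∈ F
  · exact hyF s hs
  · have hsy := le_one_sub_sum_of_notMem (hnonneg · y) (hsum y) hs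
    have hsx := le_one_sub_sum_of_notMem (hnonneg · x) (hsum x) hs
    rw [abs_sub_lt_iff]
    constructor <;> linarith [hnonneg s x, hnonneg s y]

theorem exists_mem_nhds_eq_of_lt_derivPOU (m n : ℕ) (hm : 1 ≤ m) (hn : 1 ≤ n)
    (hcont : ∀ s, Continuous (f s)) (hrange : ∀ s x, f s x ∈ Icc (0 : ℝ) 1)
    (hsum : ∀ x, HasSum (fun s => f s x) 1) (x : X) :
    ∃ U ∈ 𝓝 x, ∀ T₁ T₂ : Finset S, T₁.card = n → T₂.card = n →
      (∃ y ∈ U, 1 / (m : ℝ) < derivPOU f T₁ y) → (∃ y ∈ U, 1 / (m : ℝ) < derivPOU f T₂ y) →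
      T₁ = T₂ := by
  set δ : ℝ := 1 / m / n
  have hδ : 0 < δ := by positivity
  have hbdd : ∀ y, BddAbove (range fun s => f s y) :=
    fun y => ⟨1, forall_mem_range.2 fun s => (hrange s y).2⟩
  have hgap : ∀ y (T : Finset S), T.card = n → 1 / (m : ℝ) < derivPOU f T y →
      ∀ t ∈ T, ∀ s ∉ T, f s y + δ < f t y := fun y T hT h t ht s hs => by
    have := add_div_card_lt_of_lt_derivPOU (hbdd y) (by positivity) h ht hs
    rwa [hT] at this
  refine ⟨_, eventually_forall_abs_sub_lt hcont (fun s y => (hrange s y).1) hsum x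
    (half_pos hδ), ?_⟩
  rintro T₁ T₂ h₁ h₂ ⟨y₁, hy₁, hT₁⟩ ⟨y₂, hy₂, hT₂⟩
  refine Finset.eq_of_forall_add_lt_of_abs_sub_le (h₁.trans h₂.symm) (fun s => ?_)
    (hgap y₁ T₁ h₁ hT₁) (hgap y₂ T₂ h₂ hT₂)
  calc |f s y₁ - f s y₂| ≤ |f s y₁ - f s x| + |f s y₂ - f s x| :=
        (abs_sub_le _ _ _).trans_eq (by rw [abs_sub_comm (f s x)])
    _ ≤ δ := by linarith [hy₁ s, hy₂ s]

theorem exists_lt_derivPOU_mem_nhds (hcont : ∀ s, Continuous (f s))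
    (hnonneg : ∀ s x, 0 ≤ f s x) (hsum : ∀ x, HasSum (fun s => f s x) 1) (x : X) :
    ∃ T : Finset S, T.Nonempty ∧ ∃ k : ℕ, {y | 1 / ((k + 1 : ℕ) : ℝ) < derivPOU f T y} ∈ 𝓝 x := by
  obtain ⟨s₀, hs₀⟩ : ∃ s, 0 < f s x := by
    by_contra! h
    have h0 : ∀ s, f s x = 0 := fun s => (h s).antisymm (hnonneg s x)
    exact one_ne_zero ((hsum x).unique (by simp [h0]))
  obtain ⟨T, hT, ρ, c, hρ, hρc, hc, hcρ⟩ :=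
    exists_finset_gap_of_tendsto_cofinite_zero (hsum x).summable.tendsto_cofinite_zero hs₀
  set δ := (c - ρ) / 3
  have hδ : 0 < δ := by simp only [δ]; linarith
  obtain ⟨k, hk⟩ := exists_nat_one_div_lt hδ
  refine ⟨T, hT, k, ?_⟩
  filter_upwards [eventually_forall_abs_sub_lt hcont hnonneg hsum x hδ] with y hy
  have hle := sub_le_derivPOU (x := y) hT (ρ := ρ + δ) (c := c - δ) (by positivity)
    (fun t ht => by linarith [hc t ht, (abs_sub_lt_iff.1 (hy t)).2])
    (fun s hs => by linarith [hcρ s hs, (abs_sub_lt_iff.1 (hy s)).1])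
  have hsub : c - δ - (ρ + δ) = δ := by simp only [δ]; ring
  push_cast
  linarith

end PartitionOfUnity

theorem PartitionOfUnity.hasSum_apply {ι X : Type*} [TopologicalSpace X]
    (p : PartitionOfUnity ι X univ) (x : X) : HasSum (fun i => p i x) 1 := by
  have hfin : (Function.support fun i => p i x).Finite := p.locallyFinite.point_finite x
  rw [← p.sum_eq_one (mem_univ x), finsum_eq_sum _ hfin]
  exact hasSum_sum_of_ne_finset_zero (by simp)

theorem exists_sigmaDiscrete_open_refinement {X : Type*} [TopologicalSpace X] [NormalSpace X]
    [ParacompactSpace X] (𝒞 : Set (Set X)) (hopen : ∀ c ∈ 𝒞, IsOpen c) (hcover : ⋃₀ 𝒞 = univ) :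
    ∃ W : ℕ → Set (Set X),
      (∀ k, ∀ w ∈ W k, IsOpen w) ∧
      (∀ k, ∀ x : X, ∃ U ∈ 𝓝 x, ∀ w₁ ∈ W k, ∀ w₂ ∈ W k,
        (U ∩ w₁).Nonempty → (U ∩ w₂).Nonempty → w₁ = w₂) ∧
      (⋃ k, ⋃₀ W k) = univ ∧
      (∀ k, ∀ w ∈ W k, ∃ c ∈ 𝒞, w ⊆ c) := by
  obtain ⟨p, hp⟩ := PartitionOfUnity.exists_isSubordinate isClosed_univ (fun c : 𝒞 => (c : Set X))
    (fun c => hopen c c.2) (by rw [← sUnion_eq_iUnion, hcover])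
  set f : 𝒞 → X → ℝ := fun c x => p c x
  have hcont : ∀ c, Continuous (f c) := fun c => (p c).continuous
  have hrange : ∀ c x, f c x ∈ Icc (0 : ℝ) 1 := fun c x => ⟨p.nonneg c x, p.le_one c x⟩
  -- `W (pair a b)` collects the open sets `U_{T, a + 1}` with `|T| = b + 1`
  set W : ℕ → Set (Set X) := fun k => {w | ∃ T : Finset 𝒞, T.card = k.unpair.2 + 1 ∧
    w = interior {y | 1 / ((k.unpair.1 + 1 : ℕ) : ℝ) < derivPOU f T y}}
  refine ⟨W, ?_, ?_, ?_, ?_⟩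
  · rintro k w ⟨T, -, rfl⟩
    exact isOpen_interior
  · intro k x
    obtain ⟨U, hU, hdisc⟩ := exists_mem_nhds_eq_of_lt_derivPOU _ _ le_add_self le_add_self
      hcont hrange p.hasSum_apply x
    refine ⟨U, hU, ?_⟩
    rintro _ ⟨T₁, hT₁, rfl⟩ _ ⟨T₂, hT₂, rfl⟩ ⟨y₁, hy₁, hT₁y⟩ ⟨y₂, hy₂, hT₂y⟩
    rw [hdisc T₁ T₂ hT₁ hT₂ ⟨y₁, hy₁, (interior_subset hT₁y :)⟩ ⟨y₂, hy₂, (interior_subset hT₂y :)⟩]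
  · refine eq_univ_of_forall fun x => ?_
    obtain ⟨T, hT, k, hx⟩ := exists_lt_derivPOU_mem_nhds hcont (fun c x => (hrange c x).1)
      p.hasSum_apply x
    refine mem_iUnion.2 ⟨Nat.pair k (T.card - 1), _, ⟨T, ?_, rfl⟩, ?_⟩
    · simpa using (Nat.succ_pred_eq_of_pos hT.card_pos).symm
    · simpa using mem_interior_iff_mem_nhds.2 hx
  · rintro k _ ⟨T, hT, rfl⟩
    obtain ⟨c, hc⟩ := Finset.card_pos.1 (by rw [hT]; exact Nat.succ_pos _)
    refine ⟨c, c.2, fun y hy => hp c (subset_closure ?_)⟩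
    exact (pos_of_lt_derivPOU (fun c => (hrange c y).1) (by positivity)
      (interior_subset hy :) hc).ne'

theorem stmt_14 {X : Type*} [TopologicalSpace X] [TopologicalSpace.MetrizableSpace X]
    {S : Type*} (m n : ℕ) (hm : 1 ≤ m) (hn : 1 ≤ n)
    (f : S → X → ℝ) (hcont : ∀ s, Continuous (f s))
    (hrange : ∀ s x, f s x ∈ Set.Icc (0 : ℝ) 1)
    (hsum : ∀ x, HasSum (fun s => f s x) 1)
    (f' : Finset S → X → ℝ)
    (hf' : ∀ (T : Finset S) (hT : T.Nonempty) (x : X),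
      f' T x = T.card *
        max (T.inf' hT (fun t => f t x) - ⨆ t : {t : S // t ∉ T}, f t.1 x) 0) :
    (∀ x : X, ∃ U ∈ nhds x, ∀ T₁ T₂ : Finset S, T₁.card = n → T₂.card = n →
      (∃ y ∈ U, 1 / (m : ℝ) < f' T₁ y) → (∃ y ∈ U, 1 / (m : ℝ) < f' T₂ y) →
      T₁ = T₂) ∧
    (∀ 𝒞 : Set (Set X), (∀ c ∈ 𝒞, IsOpen c) → ⋃₀ 𝒞 = Set.univ →
      ∃ W : ℕ → Set (Set X),
        (∀ k, ∀ w ∈ W k, IsOpen w) ∧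
        (∀ k, ∀ x : X, ∃ U ∈ nhds x, ∀ w₁ ∈ W k, ∀ w₂ ∈ W k,
          (U ∩ w₁).Nonempty → (U ∩ w₂).Nonempty → w₁ = w₂) ∧
        (⋃ k, ⋃₀ W k) = Set.univ ∧
        (∀ k, ∀ w ∈ W k, ∃ c ∈ 𝒞, w ⊆ c)) := by
  have hf'_eq : ∀ T : Finset S, T.card = n → f' T = derivPOU f T := fun T hT =>
    have hT : T.Nonempty := Finset.card_pos.1 (hT ▸ hn)
    funext fun x => (hf' T hT x).trans (derivPOU_of_nonempty hT).symm
  refine ⟨fun x => ?_, fun 𝒞 => ?_⟩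
  · obtain ⟨U, hU, hdisc⟩ := exists_mem_nhds_eq_of_lt_derivPOU m n hm hn hcont hrange hsum x
    refine ⟨U, hU, fun T₁ T₂ h₁ h₂ => ?_⟩
    rw [hf'_eq T₁ h₁, hf'_eq T₂ h₂]
    exact hdisc T₁ T₂ h₁ h₂
  · let _ := TopologicalSpace.metrizableSpaceMetric X
    exact exists_sigmaDiscrete_open_refinement 𝒞
end

section
/- A Hausdorff topological space X is metrizable if and only if there exists a partition of unity {f_s}_{s∈S} on X such that the family {f_s^{-1}((0,1])}_{s∈S} is a basis for the topology of X. Moreover, given such a partition of unity, d(x,y) := ∑_{s∈S}|f_s(x) − f_s(y)| defines a metric inducing the topology of X. -/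
/-!
If `X` is metrizable, choose for each `n` a partition of unity subordinate to the cover by balls
of radius `1 / (n + 1)` and merge them with weights `1 / 2 ^ (n + 1)`: the weighted functions still
sum to one, and their cozero sets are those of the original functions; for each `n` these cover
`X` and have diameter at most `2 / (n + 1)`.

Conversely, `d x y = ∑ |f_s x - f_s y|` is the pullback of the `ℓ¹` distance along
`x ↦ (f_s x)_s`. It separates points because the cozero sets form a basis of a T₁ space.
A cozero set `{f_s > 0}` contains the `d`-ball of radius `f_s x` around each of its points `x`,
and `d`-balls are neighbourhoods: all but `ε` of the mass of `(f_s x)_s` sits on a finite set of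
indices, on which the `f_s` are continuous.
-/

open Set Filter Topology TopologicalSpace

section SummableAbsSub

variable {S : Type*} {a b c : S → ℝ}

theorem tsum_abs_sub_le_tsum_abs_sub_add (ha : Summable a) (hb : Summable b) (hc : Summable c) :
    ∑' s, |a s - c s| ≤ ∑' s, |a s - b s| + ∑' s, |b s - c s| := by
  rw [← (ha.sub hb).abs.tsum_add (hb.sub hc).abs]
  exact (ha.sub hc).abs.tsum_le_tsum (fun s => abs_sub_le _ _ _)
    ((ha.sub hb).abs.add (hb.sub hc).abs)

theorem tsum_abs_sub_le_sum_add {A B : ℝ} (ha₀ : 0 ≤ a) (hb₀ : 0 ≤ b) (ha : HasSum a A)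
    (hb : HasSum b B) (F : Finset S) :
    ∑' s, |a s - b s| ≤ ∑ s ∈ F, |a s - b s| + (A - ∑ s ∈ F, a s) + (B - ∑ s ∈ F, b s) := by
  have hA := ha.summable.sum_add_tsum_compl (s := F)
  have hB := hb.summable.sum_add_tsum_compl (s := F)
  rw [ha.tsum_eq] at hA
  rw [hb.tsum_eq] at hB
  rw [← (ha.summable.sub hb.summable).abs.sum_add_tsum_compl (s := F)]
  have htail : ∑' s : ((F : Set S)ᶜ : Set S), |a s - b s|
      ≤ ∑' s : ((F : Set S)ᶜ : Set S), a s + ∑' s : ((F : Set S)ᶜ : Set S), b s :=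
    calc ∑' s : ((F : Set S)ᶜ : Set S), |a s - b s|
        ≤ ∑' s : ((F : Set S)ᶜ : Set S), (a s + b s) :=
          ((ha.summable.sub hb.summable).abs.subtype _).tsum_le_tsum
            (fun s => (abs_sub _ _).trans_eq (by rw [abs_of_nonneg (ha₀ s), abs_of_nonneg (hb₀ s)]))
            ((ha.summable.subtype _).add (hb.summable.subtype _))
      _ = _ := (ha.summable.subtype _).tsum_add (hb.summable.subtype _)
  linarith

end SummableAbsSub

section CozeroBasis

variable {X S : Type*} [TopologicalSpace X] {f : S → X → ℝ}

theorem exists_pos_eq_zero_of_isTopologicalBasis_cozero [T1Space X] (hnn : ∀ s x, 0 ≤ f s x)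
    (hbasis : IsTopologicalBasis {U : Set X | ∃ s, U = {x | 0 < f s x}}) {x y : X}
    (hxy : x ≠ y) : ∃ s, 0 < f s x ∧ f s y = 0 := by
  obtain ⟨_, ⟨s, rfl⟩, hx, hsub⟩ :=
    hbasis.exists_subset_of_mem_open (mem_compl_singleton_iff.2 hxy) isOpen_compl_singleton
  exact ⟨s, hx, (hnn s y).antisymm' (not_lt.1 fun hy => hsub hy rfl)⟩

theorem tsum_abs_sub_eq_zero_iff [T1Space X] (hnn : ∀ s x, 0 ≤ f s x)
    (hsum : ∀ x, Summable (f · x))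
    (hbasis : IsTopologicalBasis {U : Set X | ∃ s, U = {x | 0 < f s x}}) (x y : X) :
    ∑' s, |f s x - f s y| = 0 ↔ x = y := by
  refine ⟨fun h => ?_, fun h => by simp [h]⟩
  by_contra hxy
  obtain ⟨s, hx, hy⟩ := exists_pos_eq_zero_of_isTopologicalBasis_cozero hnn hbasis hxy
  have := ((hsum x).sub (hsum y)).abs.le_tsum s (fun _ _ => abs_nonneg _)
  rw [h, hy, sub_zero, abs_of_pos hx] at this
  exact this.not_gt hx

theorem eventually_tsum_abs_sub_lt (hc : ∀ s, Continuous (f s)) (hnn : ∀ s x, 0 ≤ f s x)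
    (hsum : ∀ x, HasSum (f · x) 1) (x : X) {ε : ℝ} (hε : 0 < ε) :
    ∀ᶠ y in 𝓝 x, ∑' s, |f s x - f s y| < ε := by
  obtain ⟨F, hF⟩ := ((hsum x).eventually (Ioi_mem_nhds (by linarith : 1 - ε / 4 < 1))).exists
  replace hF : 1 - ε / 4 < ∑ s ∈ F, f s x := hF
  have hcont : Continuous fun y => ∑ s ∈ F, |f s x - f s y| + (1 - ∑ s ∈ F, f s y) := by
    fun_prop
  have hnear : ∀ᶠ y in 𝓝 x, ∑ s ∈ F, |f s x - f s y| + (1 - ∑ s ∈ F, f s y) < ε / 2 := by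
    refine hcont.continuousAt.eventually (gt_mem_nhds ?_)
    simp only [sub_self, abs_zero, Finset.sum_const_zero, zero_add]
    linarith
  filter_upwards [hnear] with y hy
  have := tsum_abs_sub_le_sum_add (hnn · x) (hnn · y) (hsum x) (hsum y) F
  linarith

theorem isOpen_iff_tsum_abs_sub_lt (hc : ∀ s, Continuous (f s)) (hnn : ∀ s x, 0 ≤ f s x)
    (hsum : ∀ x, HasSum (f · x) 1)
    (hbasis : IsTopologicalBasis {U : Set X | ∃ s, U = {x | 0 < f s x}}) (U : Set X) :
    IsOpen U ↔ ∀ x ∈ U, ∃ ε : ℝ, 0 < ε ∧ {y | ∑' s, |f s x - f s y| < ε} ⊆ U := by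
  refine ⟨fun hU x hx => ?_, fun h => isOpen_iff_mem_nhds.2 fun x hx => ?_⟩
  · obtain ⟨_, ⟨s, rfl⟩, hxs, hsub⟩ := hbasis.exists_subset_of_mem_open hx hU
    refine ⟨f s x, hxs, fun y hy => hsub ?_⟩
    have := ((hsum x).summable.sub (hsum y).summable).abs.le_tsum s (fun _ _ => abs_nonneg _)
    exact show 0 < f s y by linarith [le_abs_self (f s x - f s y), hy.out]
  · obtain ⟨ε, hε, hsub⟩ := h x hx
    exact mem_of_superset (eventually_tsum_abs_sub_lt hc hnn hsum x hε) hsub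

end CozeroBasis

theorem PartitionOfUnity.hasSum_apply_s15 {ι X : Type*} [TopologicalSpace X] {s : Set X}
    (ρ : PartitionOfUnity ι X s) {x : X} (hx : x ∈ s) : HasSum (ρ · x) 1 := by
  rw [← ρ.sum_finsupport hx]
  exact hasSum_sum_of_ne_finset_zero fun i hi => by simpa [ρ.mem_finsupport] using hi

theorem hasSum_prod_of_nonneg {α β : Type*} {g : α × β → ℝ} (hg : 0 ≤ g) {a : α → ℝ} {b : ℝ}
    (hfib : ∀ n, HasSum (fun c => g (n, c)) (a n)) (ha : HasSum a b) : HasSum g b := by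
  have hg_sum : Summable g := (summable_prod_of_nonneg hg).2
    ⟨fun n => (hfib n).summable, ha.summable.congr fun n => ((hfib n).tsum_eq).symm⟩
  rw [ha.unique (hg_sum.hasSum.prod_fiberwise hfib)]
  exact hg_sum.hasSum

theorem Metric.exists_partitionOfUnity_support_subset_ball {X : Type*} [MetricSpace X] {r : ℝ}
    (hr : 0 < r) : ∃ ρ : PartitionOfUnity X X univ, ∀ c, Function.support (ρ c) ⊆ ball c r := by
  obtain ⟨ρ, hρ⟩ := PartitionOfUnity.exists_isSubordinate isClosed_univ (fun c : X => ball c r)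
    (fun _ => isOpen_ball) fun x _ => mem_iUnion.2 ⟨x, mem_ball_self hr⟩
  exact ⟨ρ, fun c => (subset_tsupport _).trans (hρ c)⟩

theorem exists_partitionOfUnity_isTopologicalBasis_cozero {X : Type} [TopologicalSpace X]
    [MetrizableSpace X] :
    ∃ (S : Type) (f : S → X → ℝ),
      (∀ s, Continuous (f s)) ∧ (∀ s x, f s x ∈ Icc (0 : ℝ) 1) ∧
      (∀ x, HasSum (fun s => f s x) 1) ∧
      IsTopologicalBasis {U : Set X | ∃ s, U = {x | 0 < f s x}} := by
  let _ : MetricSpace X := metrizableSpaceMetric X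
  choose ρ hρ using fun n : ℕ =>
    Metric.exists_partitionOfUnity_support_subset_ball (X := X) (Nat.one_div_pos_of_nat (n := n))
  set w : ℕ → ℝ := fun n => 1 / 2 / 2 ^ n
  have hw : HasSum w 1 := hasSum_geometric_two' 1
  have hw₀ : ∀ n, 0 < w n := fun n => by positivity
  have hcozero : ∀ n c, {x | 0 < w n * (ρ n c x : ℝ)} = Function.support (ρ n c) := fun n c => by
    ext x
    simp [mul_pos_iff_of_pos_left (hw₀ n), ((ρ n).nonneg c x).lt_iff_ne', Function.mem_support]
  refine ⟨ℕ × X, fun s x => w s.1 * ρ s.1 s.2 x,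
    fun s => continuous_const.mul (ρ s.1 s.2).continuous,
    fun s x => ⟨mul_nonneg (hw₀ _).le ((ρ _).nonneg _ _), ?_⟩, fun x => ?_, ?_⟩
  · exact mul_le_one₀ (le_hasSum hw s.1 fun n _ => (hw₀ n).le) ((ρ _).nonneg _ _) ((ρ _).le_one _ _)
  · refine hasSum_prod_of_nonneg (fun s => mul_nonneg (hw₀ _).le ((ρ _).nonneg _ _))
      (fun n => ?_) hw
    simpa using ((ρ n).hasSum_apply_s15 (mem_univ x)).mul_left (w n)
  refine isTopologicalBasis_of_isOpen_of_nhds ?_ fun x U hx hU => ?_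
  · rintro _ ⟨s, rfl⟩
    rw [hcozero]
    exact (ρ s.1 s.2).continuous.isOpen_support
  obtain ⟨ε, hε, hball⟩ := Metric.isOpen_iff.1 hU x hx
  obtain ⟨n, hn⟩ := exists_nat_one_div_lt (half_pos hε)
  obtain ⟨c, hc⟩ := (ρ n).exists_pos (mem_univ x)
  refine ⟨_, ⟨(n, c), rfl⟩, ?_, ?_⟩ <;> simp only [hcozero]
  · exact hc.ne'
  · intro y hy
    have hxc := hρ n c hc.ne'
    have hyc := hρ n c hy
    rw [Metric.mem_ball] at hxc hyc
    exact hball (by rw [Metric.mem_ball]; linarith [dist_triangle_right y x c])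

theorem tsum_abs_sub_isMetric_of_isTopologicalBasis_cozero {X S : Type*} [TopologicalSpace X]
    [T1Space X] {f : S → X → ℝ} (hc : ∀ s, Continuous (f s)) (hnn : ∀ s x, 0 ≤ f s x)
    (hsum : ∀ x, HasSum (f · x) 1)
    (hbasis : IsTopologicalBasis {U : Set X | ∃ s, U = {x | 0 < f s x}}) :
    (∀ x y, ∑' s, |f s x - f s y| = 0 ↔ x = y) ∧
    (∀ x y, ∑' s, |f s x - f s y| = ∑' s, |f s y - f s x|) ∧
    (∀ x y z, ∑' s, |f s x - f s z| ≤ ∑' s, |f s x - f s y| + ∑' s, |f s y - f s z|) ∧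
    (∀ U : Set X, IsOpen U ↔ ∀ x ∈ U, ∃ ε : ℝ, 0 < ε ∧ {y | ∑' s, |f s x - f s y| < ε} ⊆ U) :=
  ⟨tsum_abs_sub_eq_zero_iff hnn (hsum · |>.summable) hbasis,
    fun _ _ => tsum_congr fun _ => abs_sub_comm _ _,
    fun x y z => tsum_abs_sub_le_tsum_abs_sub_add (hsum x).summable (hsum y).summable
      (hsum z).summable,
    isOpen_iff_tsum_abs_sub_lt hc hnn hsum hbasis⟩

theorem metrizableSpace_of_isTopologicalBasis_cozero {X S : Type*} [TopologicalSpace X]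
    [T1Space X] {f : S → X → ℝ} (hc : ∀ s, Continuous (f s)) (hnn : ∀ s x, 0 ≤ f s x)
    (hsum : ∀ x, HasSum (f · x) 1)
    (hbasis : IsTopologicalBasis {U : Set X | ∃ s, U = {x | 0 < f s x}}) : MetrizableSpace X :=
  let ⟨hzero, hcomm, htriangle, hopen⟩ :=
    tsum_abs_sub_isMetric_of_isTopologicalBasis_cozero hc hnn hsum hbasis
  let _ : MetricSpace X := .ofDistTopology (fun x y => ∑' s, |f s x - f s y|)
    (fun x => (hzero x x).2 rfl) hcomm htriangle hopen (fun x y => (hzero x y).1)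
  inferInstance

theorem stmt_15 {X : Type} [TopologicalSpace X] [T2Space X] :
    (TopologicalSpace.MetrizableSpace X ↔
      ∃ (S : Type) (f : S → X → ℝ),
        (∀ s, Continuous (f s)) ∧ (∀ s x, f s x ∈ Set.Icc (0 : ℝ) 1) ∧
        (∀ x, HasSum (fun s => f s x) 1) ∧
        TopologicalSpace.IsTopologicalBasis {U : Set X | ∃ s, U = {x | 0 < f s x}}) ∧
    (∀ (S : Type) (f : S → X → ℝ),
      (∀ s, Continuous (f s)) → (∀ s x, f s x ∈ Set.Icc (0 : ℝ) 1) →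
      (∀ x, HasSum (fun s => f s x) 1) →
      TopologicalSpace.IsTopologicalBasis {U : Set X | ∃ s, U = {x | 0 < f s x}} →
      ∀ d : X → X → ℝ, (d = fun x y => ∑' s, |f s x - f s y|) →
        (∀ x y, d x y = 0 ↔ x = y) ∧
        (∀ x y, d x y = d y x) ∧
        (∀ x y z, d x z ≤ d x y + d y z) ∧
        (∀ U : Set X, IsOpen U ↔ ∀ x ∈ U, ∃ ε : ℝ, 0 < ε ∧ {y | d x y < ε} ⊆ U)) := by
  refine ⟨⟨fun _ => exists_partitionOfUnity_isTopologicalBasis_cozero, ?_⟩, ?_⟩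
  · rintro ⟨S, f, hc, h01, hsum, hbasis⟩
    exact metrizableSpace_of_isTopologicalBasis_cozero hc (fun s x => (h01 s x).1) hsum hbasis
  · rintro S f hc h01 hsum hbasis d rfl
    exact tsum_abs_sub_isMetric_of_isTopologicalBasis_cozero hc (fun s x => (h01 s x).1) hsum
      hbasis
end

section
/- Let X be a topological space, U and V open subsets with X = U ∪ V, f = {f_s}_{s∈S} a partition of unity on U, g = {g_s}_{s∈S} a partition of unity on V, and α : X → [0,1] continuous with α^{-1}((0,1]) ⊆ U and α^{-1}([0,1)) ⊆ V. Then h_s := α·f_s + (1−α)·g_s (where α·f_s is extended by 0 outside U and (1−α)·g_s by 0 outside V) defines a partition of unity {h_s}_{s∈S} on X, and each h_s is continuous. -/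
/-!
Where `α > 0` we are inside `U`, where `α < 1` inside `V`, so `α` vanishes off `U` and `1 - α`
off `V`. A continuous function vanishing off an open set `W`, multiplied by a function that is
continuous and bounded on `W` and extended by zero, is continuous: at a point outside `W` the
product is squeezed to `0` by the first factor. The sums are `α + (1 - α) = 1`, since off `U`
(resp. `V`) the weight `α` (resp. `1 - α`) is itself zero.
-/

open Filter Topology Set

section VanishingOff

variable {X R : Type*} {W : Set X}

theorem continuous_indicator_mul [TopologicalSpace X] [NonUnitalSeminormedRing R]
    (hW : IsOpen W) {φ p : X → R} (hφ : Continuous φ) (hφW : ∀ x ∉ W, φ x = 0)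
    (hp : ContinuousOn p W) {C : ℝ} (hpC : ∀ x ∈ W, ‖p x‖ ≤ C) :
    Continuous (W.indicator fun x => φ x * p x) := by
  refine continuous_iff_continuousAt.2 fun x => ?_
  by_cases hx : x ∈ W
  · exact (hφ.continuousAt.mul (hp.continuousAt (hW.mem_nhds hx))).congr
      (eventuallyEq_of_mem (hW.mem_nhds hx) fun y hy => (indicator_of_mem hy _).symm)
  · have hbdd : IsBoundedUnder (· ≤ ·) (𝓝 x) ((‖·‖) ∘ W.indicator p) := by
      refine isBoundedUnder_of ⟨max C 0, fun y => ?_⟩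
      by_cases hy : y ∈ W
      · simpa [indicator_of_mem hy] using le_max_of_le_left (hpC y hy)
      · simp [indicator_of_notMem hy]
    have hφx : Tendsto φ (𝓝 x) (𝓝 0) := hφW x hx ▸ hφ.continuousAt
    have hprod : W.indicator (fun y => φ y * p y) = fun y => φ y * W.indicator p y :=
      funext fun y => indicator_mul_right W φ p
    rw [ContinuousAt, indicator_of_notMem hx, hprod]
    exact hφx.zero_mul_isBoundedUnder_le hbdd

theorem hasSum_indicator_mul {S : Type*} [NonAssocSemiring R] [TopologicalSpace R]
    [IsTopologicalSemiring R] {φ : X → R} (hφW : ∀ x ∉ W, φ x = 0) {p : S → X → R}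
    (hp : ∀ x ∈ W, HasSum (fun s => p s x) 1) (x : X) :
    HasSum (fun s => W.indicator (fun y => φ y * p s y) x) (φ x) := by
  by_cases hx : x ∈ W
  · simpa only [indicator_of_mem hx, mul_one] using (hp x hx).mul_left (φ x)
  · simpa only [indicator_of_notMem hx, hφW x hx] using hasSum_zero

end VanishingOff

theorem norm_le_one_of_hasSum_one {S : Type*} {p : S → ℝ} (hp0 : ∀ s, 0 ≤ p s)
    (hp : HasSum p 1) (s : S) : ‖p s‖ ≤ 1 :=
  (Real.norm_of_nonneg (hp0 s)).trans_le (le_hasSum hp s fun t _ => hp0 t)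

theorem stmt_16_general {X : Type*} [TopologicalSpace X] {S : Type*}
    (U V : Set X) (hUo : IsOpen U) (hVo : IsOpen V)
    (f g : S → X → ℝ)
    (hfc : ∀ s, ContinuousOn (f s) U) (hgc : ∀ s, ContinuousOn (g s) V)
    (hf0 : ∀ s, ∀ x ∈ U, 0 ≤ f s x) (hg0 : ∀ s, ∀ x ∈ V, 0 ≤ g s x)
    (hfsum : ∀ x ∈ U, HasSum (fun s => f s x) 1)
    (hgsum : ∀ x ∈ V, HasSum (fun s => g s x) 1)
    (α : X → ℝ) (hαc : Continuous α) (hα01 : ∀ x, α x ∈ Set.Icc (0 : ℝ) 1)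
    (hαU : {x | 0 < α x} ⊆ U) (hαV : {x | α x < 1} ⊆ V) :
    ∀ h : S → X → ℝ,
      (h = fun s x => U.indicator (fun x => α x * f s x) x +
                      V.indicator (fun x => (1 - α x) * g s x) x) →
      (∀ s, Continuous (h s)) ∧ (∀ x, HasSum (fun s => h s x) 1) := by
  rintro h rfl
  have hα_off_U : ∀ x ∉ U, α x = 0 := fun x hx =>
    le_antisymm (not_lt.1 fun hpos => hx (hαU hpos)) (hα01 x).1
  have hα_off_V : ∀ x ∉ V, 1 - α x = 0 := fun x hx =>
    sub_eq_zero.2 (le_antisymm (not_lt.1 fun hlt => hx (hαV hlt)) (hα01 x).2)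
  refine ⟨fun s => ?_, fun x => ?_⟩
  · exact (continuous_indicator_mul hUo hαc hα_off_U (hfc s)
        fun x hx => norm_le_one_of_hasSum_one (hf0 · x hx) (hfsum x hx) s).add
      (continuous_indicator_mul hVo (continuous_const.sub hαc) hα_off_V (hgc s)
        fun x hx => norm_le_one_of_hasSum_one (hg0 · x hx) (hgsum x hx) s)
  · simpa using
      (hasSum_indicator_mul hα_off_U hfsum x).add (hasSum_indicator_mul hα_off_V hgsum x)

theorem stmt_16 {X : Type*} [TopologicalSpace X] {S : Type*}
    (U V : Set X) (hUo : IsOpen U) (hVo : IsOpen V) (hUV : U ∪ V = Set.univ)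
    (f g : S → X → ℝ)
    (hfc : ∀ s, ContinuousOn (f s) U) (hgc : ∀ s, ContinuousOn (g s) V)
    (hf0 : ∀ s, ∀ x ∈ U, 0 ≤ f s x) (hg0 : ∀ s, ∀ x ∈ V, 0 ≤ g s x)
    (hfsum : ∀ x ∈ U, HasSum (fun s => f s x) 1)
    (hgsum : ∀ x ∈ V, HasSum (fun s => g s x) 1)
    (α : X → ℝ) (hαc : Continuous α) (hα01 : ∀ x, α x ∈ Set.Icc (0 : ℝ) 1)
    (hαU : {x | 0 < α x} ⊆ U) (hαV : {x | α x < 1} ⊆ V) :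
    ∀ h : S → X → ℝ,
      (h = fun s x => U.indicator (fun x => α x * f s x) x +
                      V.indicator (fun x => (1 - α x) * g s x) x) →
      (∀ s, Continuous (h s)) ∧ (∀ x, HasSum (fun s => h s x) 1) :=
  stmt_16_general U V hUo hVo f g hfc hgc hf0 hg0 hfsum hgsum α hαc hα01 hαU hαV
end

section
/- Let J be a set, {X_j}_{j∈J} a family of compact topological spaces, A a closed subset of the product ∏_{j∈J} X_j, and f : A → (Y, d) a continuous map to a metric space. For every ε > 0 there exists a finite subset F of J such that for all x = (x_j), y = (y_j) ∈ A, if x_j = y_j for all j ∈ F then d(f(x), f(y)) < ε. -/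
/-! The sets `{(x, y) ∈ A × A | x j = y j}` are closed in the compact space `A × A`, and their
intersection over all `j ∈ J` is the diagonal, which lies in the open set
`{(x, y) | dist (f x) (f y) < ε}`. By compactness finitely many of them already do. -/

open Set

theorem exists_finset_forall_eq_imp_mem {K J : Type*} {X : J → Type*} [TopologicalSpace K]
    [CompactSpace K] [∀ j, TopologicalSpace (X j)] [∀ j, T2Space (X j)] {p : ∀ j, K → X j}
    (hp : ∀ j, Continuous (p j)) (hsep : ∀ x y, (∀ j, p j x = p j y) → x = y)
    {U : Set (K × K)} (hU : IsOpen U) (hdiag : ∀ x, (x, x) ∈ U) :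
    ∃ F : Finset J, ∀ x y, (∀ j ∈ F, p j x = p j y) → (x, y) ∈ U := by
  have hclosed (j : J) : IsClosed {q : K × K | p j q.1 = p j q.2} :=
    isClosed_eq ((hp j).comp continuous_fst) ((hp j).comp continuous_snd)
  have hempty : Uᶜ ∩ ⋂ j, {q : K × K | p j q.1 = p j q.2} = ∅ := by
    refine eq_empty_of_forall_notMem fun ⟨x, y⟩ ⟨hxy, heq⟩ ↦ hxy ?_
    rw [hsep x y (mem_iInter.mp heq)]
    exact hdiag y
  obtain ⟨F, hF⟩ := hU.isClosed_compl.isCompact.elim_finite_subfamily_closed _ hclosed hempty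
  refine ⟨F, fun x y hxy ↦ not_not.mp fun hU ↦ ?_⟩
  exact (eq_empty_iff_forall_notMem.mp hF) (x, y) ⟨hU, mem_iInter₂.mpr hxy⟩

theorem stmt_17 {J : Type*} {X : J → Type*}
    [∀ j, TopologicalSpace (X j)] [∀ j, CompactSpace (X j)] [∀ j, T2Space (X j)]
    {Y : Type*} [MetricSpace Y]
    (A : Set (∀ j, X j)) (hA : IsClosed A)
    (f : A → Y) (hf : Continuous f) :
    ∀ ε : ℝ, 0 < ε → ∃ F : Finset J, ∀ x y : A,
      (∀ j ∈ F, (x : ∀ j, X j) j = (y : ∀ j, X j) j) → dist (f x) (f y) < ε := by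
  intro ε hε
  have : CompactSpace A := isCompact_iff_compactSpace.mp hA.isCompact
  exact exists_finset_forall_eq_imp_mem (p := fun j (x : A) ↦ (x : ∀ j, X j) j)
    (fun j ↦ (continuous_apply j).comp continuous_subtype_val)
    (fun x y h ↦ Subtype.ext (funext h))
    (isOpen_lt (continuous_dist.comp (hf.prodMap hf)) continuous_const)
    (fun x ↦ by simpa using hε)
end

section
/- Let X be a topological space, (Y, d) a metric space, and {f_s : X → Y}_{s∈S} a family of functions such that (i) the family is equicontinuous, and (ii) for each x ∈ X there is a compact subset Y_x ⊆ Y containing f_s(x) for all s ∈ S. Then there exist a compact Hausdorff space Z and a continuous map f : X × Z → Y such that every f_s equals f(·, z) for some z ∈ Z. Conversely, if such Z and f exist, then (i) and (ii) hold. -/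
/-!
Forward direction: take for `Z` the closure of `{f s}` in the product space `X → Y`. It lies in
the compact box `∏ₓ Y_x`, so it is compact, and it is still equicontinuous; equicontinuity
together with pointwise continuity in the parameter makes evaluation `X × Z → Y` jointly continuous.
Converse: a map continuous on `X × Z` with `Z` compact is uniformly continuous across the compact
fibres `{x} × Z`, which is equicontinuity of its sections, and `f(x, Z)` is a compact set
containing every `f_s(x)`.
-/

open Filter Function Set Topology

section

variable {X Z α : Type*} [TopologicalSpace X] [TopologicalSpace Z] [UniformSpace α]

theorem Equicontinuous.continuous_uncurry_flip {u : Z → X → α} (hu : Equicontinuous u)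
    (hu_cont : Continuous u) : Continuous (uncurry (flip u)) := by
  refine continuous_iff_continuousAt.2 fun ⟨a, z₀⟩ => Uniform.continuousAt_iff'_right.2 ?_
  intro U hU
  obtain ⟨V, hV, hVU⟩ := comp_mem_uniformity_sets hU
  have h_param : ∀ᶠ z in 𝓝 z₀, (u z₀ a, u z a) ∈ V :=
    ((continuous_apply a).comp hu_cont).continuousAt.eventually (mem_nhds_left _ hV)
  rw [nhds_prod_eq]
  exact ((hu a V hV).prod_mk h_param).mono fun ⟨x, z⟩ ⟨hx, hz⟩ =>
    hVU (SetRel.prodMk_mem_comp hz (hx z))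

theorem CompactSpace.equicontinuous_of_continuous_uncurry_flip [CompactSpace Z] {u : Z → X → α}
    (hu : Continuous (uncurry (flip u))) : Equicontinuous u := by
  intro a U hU
  obtain ⟨v, hv, hvU⟩ := isCompact_univ.mem_uniformity_of_prod (f := flip u) hu.continuousOn
    (mem_univ a) (tendsto_swap_uniformity hU)
  rw [nhdsWithin_univ] at hv
  filter_upwards [hv] with x hx z using hvU x hx z (mem_univ z)

end

theorem Metric.equicontinuous_iff_pair {S X Y : Type*} [TopologicalSpace X] [PseudoMetricSpace Y]
    {f : S → X → Y} :
    Equicontinuous f ↔ ∀ ε : ℝ, 0 < ε → ∀ a : X, ∃ U ∈ 𝓝 a,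
      ∀ s, ∀ x ∈ U, ∀ y ∈ U, dist (f s x) (f s y) < ε := by
  simp only [Equicontinuous, Metric.equicontinuousAt_iff_pair]
  constructor
  · intro h ε hε a
    obtain ⟨U, hU, hUf⟩ := h a ε hε
    exact ⟨U, hU, fun s x hx y hy => hUf x hx y hy s⟩
  · intro h a ε hε
    obtain ⟨U, hU, hUf⟩ := h ε hε a
    exact ⟨U, hU, fun x hx y hy s => hUf s x hx y hy⟩

theorem stmt_18 {X Y : Type} [TopologicalSpace X] [MetricSpace Y] {S : Type}
    (f : S → X → Y) :
    ((∀ ε : ℝ, 0 < ε → ∀ a : X, ∃ U ∈ nhds a,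
        ∀ s, ∀ x ∈ U, ∀ y ∈ U, dist (f s x) (f s y) < ε) ∧
      (∀ x : X, ∃ K : Set Y, IsCompact K ∧ ∀ s, f s x ∈ K)) ↔
    (∃ (Z : Type) (_ : TopologicalSpace Z) (_ : CompactSpace Z) (_ : T2Space Z)
        (F : X × Z → Y), Continuous F ∧ ∀ s : S, ∃ z : Z, ∀ x : X, f s x = F (x, z)) := by
  rw [← Metric.equicontinuous_iff_pair]
  constructor
  · rintro ⟨hf, hbound⟩
    choose K hK hfK using hbound
    have hZ : IsCompact (closure (range f)) :=
      (isCompact_univ_pi hK).closure_of_subset (range_subset_iff.2 fun s x _ => hfK x s)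
    have : CompactSpace (closure (range f)) := isCompact_iff_compactSpace.mp hZ
    refine ⟨closure (range f), inferInstance, inferInstance, inferInstance,
      uncurry (flip (↑)), ?_, fun s => ⟨⟨f s, subset_closure (mem_range_self s)⟩, fun x => rfl⟩⟩
    exact (Set.Equicontinuous.closure (equicontinuous_iff_range.1 hf)).continuous_uncurry_flip
      continuous_subtype_val
  · rintro ⟨Z, _, _, _, F, hF, hfF⟩
    choose z hz using hfF
    obtain rfl : f = fun s x => F (x, z s) := funext₂ hz
    have hF_sections : Equicontinuous fun z x => F (x, z) :=
      CompactSpace.equicontinuous_of_continuous_uncurry_flip hF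
    exact ⟨hF_sections.comp z, fun x =>
      ⟨_, isCompact_range (hF.comp (Continuous.prodMk_right x)), fun s => mem_range_self (z s)⟩⟩
end
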